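/- arXiv:1402.3357 — 9 statements merged into one kernel-verified Lean document; each statement's English description precedes it below -/
import Mathlib

section
/- For p > 1, the integral of (1-t^p)^(-1/p) over t from 0 to 1 equals π/(p·sin(π/p)); i.e., π_p/2 = π/(p·sin(π/p)) where π_p = 2∫₀¹ (1-t^p)^(-1/p) dt. -/
open Real Set

-- Lemma A: real beta value
theorem lemA {s : ℝ} (hs : 0 < s) (hs1 : s < 1) :
    ∫ x in (0:ℝ)..1, x ^ (s - 1) * (1 - x) ^ (-s) = π / Real.sin (π * s) := by
  have hres : (0:ℝ) < (s : ℂ).re := by simpa using hs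
  have hret : (0:ℝ) < ((1 : ℂ) - s).re := by simp [hs1]
  have h1 : Complex.Gamma s * Complex.Gamma (1 - s)
      = Complex.Gamma (s + (1 - s)) * Complex.betaIntegral s (1 - s) :=
    Complex.Gamma_mul_Gamma_eq_betaIntegral hres hret
  rw [add_sub_cancel, Complex.Gamma_one, one_mul, Complex.Gamma_mul_Gamma_one_sub] at h1
  -- relate betaIntegral to the real integral
  have h2 : Complex.betaIntegral s (1 - s)
      = ((∫ x in (0:ℝ)..1, x ^ (s - 1) * (1 - x) ^ (-s) : ℝ) : ℂ) := by
    rw [Complex.betaIntegral, ← intervalIntegral.integral_ofReal]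
    refine intervalIntegral.integral_congr_ae ?_
    filter_upwards with x hx
    rw [uIoc_of_le zero_le_one] at hx
    have hx0 : (0:ℝ) ≤ x := hx.1.le
    have hx1 : (0:ℝ) ≤ 1 - x := by linarith [hx.2]
    rw [show ((s:ℂ) - 1) = ((s-1:ℝ):ℂ) by push_cast; ring,
      show (1 - (s:ℂ) - 1) = ((-s:ℝ):ℂ) by push_cast; ring,
      show (1 - (x:ℂ)) = ((1-x:ℝ):ℂ) by push_cast; ring,
      ← Complex.ofReal_cpow hx0, ← Complex.ofReal_cpow hx1, ← Complex.ofReal_mul]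
  rw [h2] at h1
  have h3 : (↑π / Complex.sin (↑π * ↑s) : ℂ) = ((π / Real.sin (π * s) : ℝ) : ℂ) := by
    push_cast [Complex.ofReal_sin]
    rfl
  rw [h3] at h1
  exact_mod_cast h1.symm

theorem pi_p_formula (p : ℝ) (hp : 1 < p) :
    ∫ t in (0:ℝ)..1, (1 - t ^ p) ^ (-(1 / p)) = π / (p * Real.sin (π / p)) := by
  have hp0 : (0:ℝ) < p := by linarith
  have hs : (0:ℝ) < 1 / p := by positivity
  have hs1 : 1 / p < 1 := by rw [div_lt_one hp0]; linarith
  set G : ℝ → ℝ := fun x => (1/p) * (x ^ (1/p - 1) * (1 - x) ^ (-(1/p))) with hG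
  -- image of Ioo under rpow
  have himg : (fun t : ℝ => t ^ p) '' Ioo 0 1 = Ioo 0 1 := by
    ext y
    constructor
    · rintro ⟨t, ⟨ht0, ht1⟩, rfl⟩
      exact ⟨rpow_pos_of_pos ht0 p, rpow_lt_one ht0.le ht1 hp0⟩
    · rintro ⟨hy0, hy1⟩
      refine ⟨y ^ (1/p), ⟨rpow_pos_of_pos hy0 _, rpow_lt_one hy0.le hy1 hs⟩, ?_⟩
      show (y ^ (1/p)) ^ p = y
      rw [← Real.rpow_mul hy0.le, one_div, inv_mul_cancel₀ hp0.ne', Real.rpow_one]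
  have hinj : InjOn (fun t : ℝ => t ^ p) (Ioo 0 1) := by
    intro x hx y hy hxy
    have : (x ^ p) ^ (1/p) = (y ^ p) ^ (1/p) := by simp only at hxy; rw [hxy]
    rwa [← Real.rpow_mul hx.1.le, ← Real.rpow_mul hy.1.le, mul_one_div,
      div_self hp0.ne', Real.rpow_one, Real.rpow_one] at this
  have hder : ∀ x ∈ Ioo (0:ℝ) 1, HasDerivWithinAt (fun t : ℝ => t ^ p)
      (p * x ^ (p - 1)) (Ioo 0 1) x := fun x _ =>
    (Real.hasDerivAt_rpow_const (Or.inr hp.le)).hasDerivWithinAt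
  have key := MeasureTheory.integral_image_eq_integral_abs_deriv_smul measurableSet_Ioo hder hinj G
  rw [himg] at key
  have h1 : ∫ t in (0:ℝ)..1, (1 - t ^ p) ^ (-(1 / p))
      = ∫ t in Ioo (0:ℝ) 1, (1 - t ^ p) ^ (-(1 / p)) := by
    rw [intervalIntegral.integral_of_le zero_le_one,
      MeasureTheory.integral_Ioc_eq_integral_Ioo]
  have h2 : ∫ t in Ioo (0:ℝ) 1, (1 - t ^ p) ^ (-(1 / p))
      = ∫ t in Ioo (0:ℝ) 1, |p * t ^ (p - 1)| • G (t ^ p) := by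
    refine MeasureTheory.setIntegral_congr_fun measurableSet_Ioo fun t ht => ?_
    have ht0 := ht.1
    have ht1 := ht.2
    have htp0 : (0:ℝ) < t ^ p := rpow_pos_of_pos ht0 p
    have htp1 : t ^ p < 1 := rpow_lt_one ht0.le ht1 hp0
    have habs : |p * t ^ (p - 1)| = p * t ^ (p - 1) := by
      rw [abs_of_pos]; positivity
    rw [smul_eq_mul, habs, hG]
    have h3 : (t ^ p) ^ (1/p - 1) = t ^ (1 - p) := by
      rw [← Real.rpow_mul ht0.le]
      congr 1
      field_simp
    simp only []
    rw [h3]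
    have h4 : t ^ (p - 1) * t ^ (1 - p) = 1 := by
      rw [← Real.rpow_add ht0]; norm_num
    rw [show p * t ^ (p-1) * (1/p * (t ^ (1-p) * (1 - t ^ p) ^ (-(1/p))))
        = (p * (1/p)) * ((t ^ (p-1) * t ^ (1-p)) * (1 - t ^ p) ^ (-(1/p))) from by ring,
      h4, mul_one_div, div_self hp0.ne', one_mul, one_mul]
  have h5 : ∫ x in Ioo (0:ℝ) 1, G x = ∫ x in (0:ℝ)..1, G x := by
    rw [intervalIntegral.integral_of_le zero_le_one,
      MeasureTheory.integral_Ioc_eq_integral_Ioo]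
  have h6 : ∫ x in (0:ℝ)..1, G x = (1/p) * (π / Real.sin (π * (1/p))) := by
    rw [hG, intervalIntegral.integral_const_mul, lemA hs hs1]
  rw [h1, h2, ← key, h5, h6, mul_one_div π p]
  rw [mul_comm p, ← div_div]
  ring
end

section
/- For p > 0, the function tanh_p, defined as the inverse of x ↦ ∫₀ˣ dt/(1-t^p) on [0,1), coincides with sinh_p(y)/cosh_p(y), where sinh_p is the inverse of x ↦ ∫₀ˣ (1+t^p)^{-1/p} dt and cosh_p(y) = (1 + (sinh_p y)^p)^{1/p}. -/
/-!
For `s ≥ 0` put `u = s / (1 + s^p)^(1/p)`. Then `1 - u^p = (1 + s^p)⁻¹` and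
`du/ds = (1 + s^p)^(-1/p - 1)`, so the substitution turns `∫₀ᵘ dt / (1 - t^p)` into
`∫₀ˢ (1 + t^p)^(-1/p) dt`: `arctanh_p u = arcsinh_p s`. Applying `tanh_p` with `s = sinh_p y`
gives the identity, provided every `y ≥ 0` is of the form `arcsinh_p s`; this holds by the
intermediate value theorem, because `arcsinh_p s ≥ 2^(-1/p) log (1 + s)` is unbounded.
-/

open Real Set MeasureTheory intervalIntegral

namespace GeneralizedTrig

noncomputable def arcsinhp (p x : ℝ) : ℝ := ∫ t in (0 : ℝ)..x, (1 + t ^ p) ^ (-(1 / p))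

noncomputable def arctanhp (p x : ℝ) : ℝ := ∫ t in (0 : ℝ)..x, 1 / (1 - t ^ p)

/-- The map `sinh_p y ↦ tanh_p y`, written with a negative exponent so that it is a product. -/
noncomputable def tanhOfSinh (p t : ℝ) : ℝ := t * (1 + t ^ p) ^ (-(1 / p))

variable {p : ℝ}

lemma one_add_rpow_pos {t : ℝ} (ht : 0 ≤ t) : 0 < 1 + t ^ p := by
  have := rpow_nonneg ht p
  linarith

lemma continuousOn_one_add_rpow_rpow (hp : 0 ≤ p) (q : ℝ) :
    ContinuousOn (fun t : ℝ => (1 + t ^ p) ^ q) (Ici 0) :=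
  (continuousOn_const.add (continuousOn_id.rpow_const fun _ _ => Or.inr hp)).rpow_const
    fun _ ht => Or.inl (one_add_rpow_pos ht).ne'

lemma tanhOfSinh_eq_div {t : ℝ} (ht : 0 ≤ t) :
    tanhOfSinh p t = t / (1 + t ^ p) ^ (1 / p) := by
  rw [tanhOfSinh, rpow_neg (one_add_rpow_pos ht).le, ← div_eq_mul_inv]

lemma tanhOfSinh_mem_Ico (hp : 0 < p) {t : ℝ} (ht : 0 ≤ t) : tanhOfSinh p t ∈ Ico 0 1 := by
  have hA := one_add_rpow_pos (p := p) ht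
  rw [tanhOfSinh_eq_div ht]
  refine ⟨by positivity, (div_lt_one (by positivity)).2 ?_⟩
  rw [one_div, lt_rpow_inv_iff_of_pos ht hA.le hp]
  exact lt_one_add _

lemma one_sub_tanhOfSinh_rpow (hp : p ≠ 0) {t : ℝ} (ht : 0 ≤ t) :
    1 - tanhOfSinh p t ^ p = (1 + t ^ p)⁻¹ := by
  have hA := one_add_rpow_pos (p := p) ht
  rw [tanhOfSinh_eq_div ht, div_rpow ht (by positivity), one_div, rpow_inv_rpow hA.le hp]
  field_simp
  ring

lemma continuousOn_tanhOfSinh (hp : 0 ≤ p) : ContinuousOn (tanhOfSinh p) (Ici 0) :=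
  continuousOn_id.mul (continuousOn_one_add_rpow_rpow hp _)

lemma hasDerivAt_tanhOfSinh (hp : p ≠ 0) {t : ℝ} (ht : 0 < t) :
    HasDerivAt (tanhOfSinh p) ((1 + t ^ p) ^ (-(1 / p) - 1)) t := by
  have hA := one_add_rpow_pos (p := p) ht.le
  have hpow : HasDerivAt (fun s : ℝ => (1 + s ^ p) ^ (-(1 / p)))
      (p * t ^ (p - 1) * -(1 / p) * (1 + t ^ p) ^ (-(1 / p) - 1)) t :=
    ((hasDerivAt_rpow_const (Or.inl ht.ne')).const_add 1).rpow_const (Or.inl hA.ne')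
  refine ((hasDerivAt_id' t).mul hpow).congr_deriv ?_
  rw [rpow_sub_one hA.ne', rpow_sub_one ht.ne']
  field_simp
  ring

theorem arctanhp_tanhOfSinh (hp : 0 < p) {x : ℝ} (hx : 0 ≤ x) :
    arctanhp p (tanhOfSinh p x) = arcsinhp p x := by
  have hIcc : uIcc 0 x = Icc 0 x := uIcc_of_le hx
  have hIoo : Ioo (min 0 x) (max 0 x) = Ioo 0 x := by rw [min_eq_left hx, max_eq_right hx]
  have hsubst := integral_comp_mul_deriv_of_deriv_nonneg (g := fun u => 1 / (1 - u ^ p))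
    ((continuousOn_tanhOfSinh hp.le).mono (hIcc ▸ Icc_subset_Ici_self))
    (fun t ht => hasDerivAt_tanhOfSinh hp.ne' (hIoo ▸ ht).1)
    (fun t ht => (rpow_pos_of_pos (one_add_rpow_pos (hIoo ▸ ht).1.le) _).le)
  rw [show tanhOfSinh p 0 = 0 by simp [tanhOfSinh]] at hsubst
  rw [arctanhp, ← hsubst, arcsinhp]
  refine integral_congr fun t ht => ?_
  have ht0 : 0 ≤ t := (hIcc ▸ ht).1
  simp only [Function.comp_apply, one_sub_tanhOfSinh_rpow hp.ne' ht0, one_div, inv_inv]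
  rw [rpow_sub_one (one_add_rpow_pos ht0).ne']
  field_simp

/-- From `1 + t^p ≤ 2 (1 + t)^p`. -/
lemma inv_two_rpow_mul_inv_one_add_le (hp : 0 < p) {t : ℝ} (ht : 0 ≤ t) :
    (2 ^ (1 / p))⁻¹ * (1 + t)⁻¹ ≤ (1 + t ^ p) ^ (-(1 / p)) := by
  have h1t : 1 ≤ 1 + t := le_add_of_nonneg_right ht
  have hle : 1 + t ^ p ≤ 2 * (1 + t) ^ p := by
    have := one_le_rpow h1t hp.le
    have := rpow_le_rpow ht (le_add_of_nonneg_left zero_le_one) hp.le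
    linarith
  rw [← mul_inv, rpow_neg (one_add_rpow_pos ht).le]
  refine inv_anti₀ (rpow_pos_of_pos (one_add_rpow_pos ht) _) ?_
  calc (1 + t ^ p) ^ (1 / p) ≤ (2 * (1 + t) ^ p) ^ (1 / p) :=
        rpow_le_rpow (one_add_rpow_pos ht).le hle (by positivity)
    _ = 2 ^ (1 / p) * (1 + t) := by
        rw [mul_rpow zero_le_two (by positivity), ← rpow_mul (by positivity),
          mul_one_div_cancel hp.ne', rpow_one]

lemma intervalIntegrable_one_add_rpow_rpow (hp : 0 ≤ p) (q : ℝ) {x : ℝ} (hx : 0 ≤ x) :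
    IntervalIntegrable (fun t : ℝ => (1 + t ^ p) ^ q) volume 0 x :=
  ((continuousOn_one_add_rpow_rpow hp q).mono Icc_subset_Ici_self).intervalIntegrable_of_Icc hx

lemma inv_two_rpow_mul_log_one_add_le_arcsinhp (hp : 0 < p) {x : ℝ} (hx : 0 ≤ x) :
    (2 ^ (1 / p))⁻¹ * log (1 + x) ≤ arcsinhp p x := by
  have hlog : ∫ t in (0 : ℝ)..x, (1 + t)⁻¹ = log (1 + x) := by
    rw [integral_comp_add_left (fun t => t⁻¹), add_zero,
      integral_inv_of_pos one_pos (by linarith), div_one]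
  rw [← hlog, ← intervalIntegral.integral_const_mul]
  refine integral_mono_on hx ?_ (intervalIntegrable_one_add_rpow_rpow hp.le _ hx)
    fun t ht => inv_two_rpow_mul_inv_one_add_le hp ht.1
  refine ContinuousOn.intervalIntegrable_of_Icc hx (ContinuousOn.mul continuousOn_const ?_)
  exact ContinuousOn.inv₀ (by fun_prop) fun t ht => (by linarith [ht.1] : (0 : ℝ) < 1 + t).ne'

theorem exists_arcsinhp_eq (hp : 0 < p) {y : ℝ} (hy : 0 ≤ y) :
    ∃ x, 0 ≤ x ∧ arcsinhp p x = y := by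
  set X := exp (2 ^ (1 / p) * y) - 1
  have hX : 0 ≤ X := sub_nonneg.2 (one_le_exp (by positivity))
  have hcont : ContinuousOn (arcsinhp p) (Icc 0 X) := by
    rw [← uIcc_of_le hX]
    exact continuousOn_primitive_interval' (intervalIntegrable_one_add_rpow_rpow hp.le _ hX)
      left_mem_uIcc
  have hyX : y ≤ arcsinhp p X := by
    refine le_trans (le_of_eq ?_) (inv_two_rpow_mul_log_one_add_le_arcsinhp hp hX)
    rw [add_sub_cancel, log_exp, inv_mul_cancel_left₀ (by positivity)]
  obtain ⟨x, hx, hFx⟩ := intermediate_value_Icc hX hcont ⟨by simpa [arcsinhp] using hy, hyX⟩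
  exact ⟨x, hx.1, hFx⟩

end GeneralizedTrig

open GeneralizedTrig in
/-- For `p > 0`, `tanh_p` (inverse of `x ↦ ∫₀ˣ dt/(1-t^p)` on `[0,1)`) coincides with
`sinh_p / cosh_p`, where `sinh_p` is the inverse of `x ↦ ∫₀ˣ (1+t^p)^(-1/p) dt`
and `cosh_p y = (1 + (sinh_p y)^p)^(1/p)`. -/
theorem tanhp_eq_sinhp_div_coshp (p : ℝ) (hp : 0 < p)
    (sinhp tanhp : ℝ → ℝ)
    (hsinh : ∀ x : ℝ, 0 ≤ x → sinhp (∫ t in (0:ℝ)..x, (1 + t ^ p) ^ (-(1 / p))) = x)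
    (htanh : ∀ x ∈ Set.Ico (0:ℝ) 1, tanhp (∫ t in (0:ℝ)..x, 1 / (1 - t ^ p)) = x) :
    ∀ y : ℝ, 0 ≤ y → tanhp y = sinhp y / (1 + (sinhp y) ^ p) ^ (1 / p) := by
  intro y hy
  obtain ⟨x, hx, rfl⟩ := exists_arcsinhp_eq hp hy
  have hsinh_x : sinhp (arcsinhp p x) = x := hsinh x hx
  have htanh_x : tanhp (arcsinhp p x) = tanhOfSinh p x := by
    rw [← arctanhp_tanhOfSinh hp hx]
    exact htanh _ (tanhOfSinh_mem_Ico hp hx)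
  rw [htanh_x, hsinh_x, tanhOfSinh_eq_div hx]
end

section
/- For p > 1 and 0 < s < 1, the inequality s·p³/(p+1)² · (1/(p+1)² - (log s)²/p²) < ∫₀¹ u^{1/p} (1-su)/(1+su)³ · (log(su))² du holds. -/
/-!
With `t = 1 / p ∈ (0, 1)`, the weight `(1 - s u) / (1 + s u) ^ 3` dominates `(1 - u) ^ 4` and
`log (s u) ^ 2` dominates `log u ^ 2` on `(0, 1)`, so the integral is at least
`∫₀¹ u ^ t (1 - u) ^ 4 log u ^ 2`. Expanding `(1 - u) ^ 4` and using `∫₀¹ u ^ a log u ^ 2 = 2 / (a + 1) ^ 3`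
evaluates this in closed form, and a polynomial inequality shows that it exceeds
`t / (t + 1) ^ 4 = p ^ 3 / (p + 1) ^ 4`, which in turn exceeds the left-hand side because `s < 1`.
-/

open Real Set Filter Topology MeasureTheory intervalIntegral

theorem tendsto_rpow_mul_log_sq_nhdsGT_zero {r : ℝ} (hr : 0 < r) :
    Tendsto (fun x => x ^ r * log x ^ 2) (𝓝[>] 0) (𝓝 0) := by
  have h := (tendsto_log_mul_rpow_nhdsGT_zero (half_pos hr)).pow 2
  rw [zero_pow two_ne_zero] at h
  refine h.congr' (eventually_mem_nhdsWithin.mono fun x (hx : 0 < x) => ?_)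
  rw [mul_pow, ← rpow_mul_natCast hx.le]
  ring_nf

namespace RpowLogSq

variable {t : ℝ}

noncomputable def antideriv (t u : ℝ) : ℝ :=
  u ^ (t + 1) * (log u ^ 2 / (t + 1) - 2 * log u / (t + 1) ^ 2 + 2 / (t + 1) ^ 3)

theorem hasDerivAt_antideriv (ht : t ≠ -1) {u : ℝ} (hu : 0 < u) :
    HasDerivAt (antideriv t) (u ^ t * log u ^ 2) u := by
  have ht' : t + 1 ≠ 0 := by contrapose! ht; linarith
  have hlog := hasDerivAt_log hu.ne'
  refine ((hasDerivAt_rpow_const (p := t + 1) (Or.inl hu.ne')).mul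
    ((((hlog.pow 2).div_const _).sub ((hlog.const_mul 2).div_const _)).add_const _)).congr_deriv ?_
  simp only [Pi.sub_apply, Pi.pow_apply, add_sub_cancel_right]
  rw [rpow_add_one hu.ne']
  field_simp
  ring

theorem continuousOn_antideriv (ht : -1 < t) : ContinuousOn (antideriv t) (Ici 0) := by
  have hr : 0 < t + 1 := by linarith
  intro u hu
  rcases (mem_Ici.1 hu).eq_or_lt with rfl | hu
  · rw [← continuousWithinAt_Ioi_iff_Ici, ContinuousWithinAt]
    have hpow : Tendsto (fun x : ℝ => x ^ (t + 1)) (𝓝[>] 0) (𝓝 0) := by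
      simpa [zero_rpow hr.ne'] using
        (continuousAt_rpow_const 0 _ (Or.inr hr.le)).tendsto.mono_left nhdsWithin_le_nhds
    have h := (((tendsto_rpow_mul_log_sq_nhdsGT_zero hr).div_const (t + 1)).sub
      (((tendsto_log_mul_rpow_nhdsGT_zero hr).const_mul 2).div_const ((t + 1) ^ 2))).add
      ((hpow.const_mul 2).div_const ((t + 1) ^ 3))
    simp only [zero_div, mul_zero, sub_zero, add_zero] at h
    convert h using 1
    · ext x; simp only [antideriv]; ring
    · simp [antideriv, zero_rpow hr.ne']
  · exact (hasDerivAt_antideriv ht.ne' hu).continuousAt.continuousWithinAt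

end RpowLogSq

open RpowLogSq in
theorem intervalIntegrable_rpow_mul_log_sq {t : ℝ} (ht : -1 < t) :
    IntervalIntegrable (fun u => u ^ t * log u ^ 2) volume 0 1 := by
  have hI : Ioo (min 0 1) (max 0 1) = Ioo (0:ℝ) 1 := by simp
  refine intervalIntegrable_deriv_of_nonneg
    ((continuousOn_antideriv ht).mono (by simp [Icc_subset_Ici_self]))
    (hI ▸ fun u hu => hasDerivAt_antideriv ht.ne' hu.1)
    (hI ▸ fun u hu => mul_nonneg (rpow_nonneg hu.1.le t) (sq_nonneg _))

open RpowLogSq in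
theorem integral_rpow_mul_log_sq {t : ℝ} (ht : -1 < t) :
    ∫ u in (0:ℝ)..1, u ^ t * log u ^ 2 = 2 / (t + 1) ^ 3 := by
  have hr : t + 1 ≠ 0 := by linarith
  rw [integral_eq_sub_of_hasDerivAt_of_le zero_le_one
    ((continuousOn_antideriv ht).mono Icc_subset_Ici_self)
    (fun u hu => hasDerivAt_antideriv ht.ne' hu.1) (intervalIntegrable_rpow_mul_log_sq ht)]
  simp [antideriv, zero_rpow hr]

theorem intervalIntegrable_log_sq : IntervalIntegrable (fun u => log u ^ 2) volume 0 1 := by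
  simpa using intervalIntegrable_rpow_mul_log_sq (t := 0) (by norm_num)

theorem intervalIntegrable_log_mul_sq {s : ℝ} (hs0 : 0 < s) (hs1 : s ≤ 1) :
    IntervalIntegrable (fun u => log (s * u) ^ 2) volume 0 1 := by
  have h := (intervalIntegrable_log_sq.mono_set (c := 0) (d := s)
    (uIcc_subset_uIcc_left (by simp [hs0.le, hs1]))).comp_mul_left (c := s)
  simpa [hs0.ne'] using h

theorem rpow_mul_one_sub_pow_eq_sum {u : ℝ} (hu : 0 < u) (t : ℝ) (n : ℕ) :
    u ^ t * (1 - u) ^ n =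
      ∑ k ∈ Finset.range (n + 1), (-1) ^ k * (n.choose k : ℝ) * u ^ (t + k) := by
  rw [sub_eq_neg_add, add_pow, Finset.mul_sum]
  refine Finset.sum_congr rfl fun k _ => ?_
  rw [rpow_add_natCast hu.ne', neg_pow]
  ring

theorem integral_rpow_mul_one_sub_pow_mul_log_sq {t : ℝ} (ht : -1 < t) (n : ℕ) :
    ∫ u in (0:ℝ)..1, u ^ t * (1 - u) ^ n * log u ^ 2 =
      ∑ k ∈ Finset.range (n + 1), (-1) ^ k * (n.choose k : ℝ) * (2 / (t + k + 1) ^ 3) := by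
  have hk (k : ℕ) : -1 < t + k := by linarith [k.cast_nonneg (α := ℝ)]
  calc ∫ u in (0:ℝ)..1, u ^ t * (1 - u) ^ n * log u ^ 2
      = ∫ u in (0:ℝ)..1, ∑ k ∈ Finset.range (n + 1),
          (-1) ^ k * (n.choose k : ℝ) * (u ^ (t + k) * log u ^ 2) := by
        refine integral_congr_ae (Eventually.of_forall fun u hu => ?_)
        rw [rpow_mul_one_sub_pow_eq_sum (by simpa using hu.1), Finset.sum_mul]
        simp only [mul_assoc]
    _ = ∑ k ∈ Finset.range (n + 1), (-1) ^ k * (n.choose k : ℝ) * (2 / (t + k + 1) ^ 3) := by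
        rw [integral_finsetSum fun k _ => (intervalIntegrable_rpow_mul_log_sq (hk k)).const_mul _]
        simp only [intervalIntegral.integral_const_mul, integral_rpow_mul_log_sq (hk _)]

theorem integral_rpow_mul_one_sub_pow_four_mul_log_sq {t : ℝ} (ht : -1 < t) :
    ∫ u in (0:ℝ)..1, u ^ t * (1 - u) ^ 4 * log u ^ 2 =
      2 / (t + 1) ^ 3 - 8 / (t + 2) ^ 3 + 12 / (t + 3) ^ 3 - 8 / (t + 4) ^ 3 + 2 / (t + 5) ^ 3 := by
  rw [integral_rpow_mul_one_sub_pow_mul_log_sq ht]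
  simp only [Finset.sum_range_succ, Finset.sum_range_zero]
  norm_num [Nat.choose]
  ring

theorem div_add_one_pow_four_lt {t : ℝ} (ht0 : 0 < t) (ht1 : t ≤ 1) :
    t / (t + 1) ^ 4 <
      2 / (t + 1) ^ 3 - 8 / (t + 2) ^ 3 + 12 / (t + 3) ^ 3 - 8 / (t + 4) ^ 3 + 2 / (t + 5) ^ 3 := by
  -- the numerator of the difference; on `(0, 1]` its negative coefficients are absorbed by `t ^ 2`
  have hN : 0 < 2307648 + 7988448 * t + 10881360 * t ^ 2 + 6201360 * t ^ 3 - 909784 * t ^ 4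
      - 3907788 * t ^ 5 - 2959014 * t ^ 6 - 1274555 * t ^ 7 - 359958 * t ^ 8 - 69447 * t ^ 9
      - 9170 * t ^ 10 - 801 * t ^ 11 - 42 * t ^ 12 - t ^ 13 := by
    have h (k : ℕ) (hk : 2 ≤ k) : t ^ k ≤ t ^ 2 := pow_le_pow_of_le_one ht0.le ht1 hk
    linarith [h 4 (by norm_num), h 5 (by norm_num), h 6 (by norm_num), h 7 (by norm_num),
      h 8 (by norm_num), h 9 (by norm_num), h 10 (by norm_num), h 11 (by norm_num),
      h 12 (by norm_num), h 13 (by norm_num), pow_pos ht0 2, pow_pos ht0 3]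
  have hD : 0 < (t + 1) ^ 4 * (t + 2) ^ 3 * (t + 3) ^ 3 * (t + 4) ^ 3 * (t + 5) ^ 3 := by
    positivity
  rw [← sub_pos]
  refine (div_pos hN hD).trans_eq ?_
  field_simp
  ring

theorem one_sub_pow_four_le {s u : ℝ} (hs0 : 0 ≤ s) (hs1 : s ≤ 1) (hu0 : 0 ≤ u) (hu1 : u ≤ 1) :
    (1 - u) ^ 4 ≤ (1 - s * u) / (1 + s * u) ^ 3 := by
  have hsu : s * u ≤ u := mul_le_of_le_one_left hu0 hs1
  rw [le_div_iff₀ (by positivity)]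
  calc (1 - u) ^ 4 * (1 + s * u) ^ 3 = (1 - u) * ((1 - u) * (1 + s * u)) ^ 3 := by ring
    _ ≤ (1 - s * u) * 1 ^ 3 := by gcongr <;> nlinarith
    _ = 1 - s * u := by ring

theorem sq_log_le_sq_log_mul {s u : ℝ} (hs0 : 0 < s) (hs1 : s ≤ 1) (hu0 : 0 < u) (hu1 : u ≤ 1) :
    log u ^ 2 ≤ log (s * u) ^ 2 := by
  have h1 : log (s * u) ≤ log u := log_le_log (by positivity) (mul_le_of_le_one_left hu0.le hs1)
  have h2 : log u ≤ 0 := log_nonpos hu0.le hu1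
  nlinarith

theorem rpow_mul_one_sub_pow_four_mul_log_sq_le {t s u : ℝ} (hs0 : 0 < s) (hs1 : s ≤ 1)
    (hu0 : 0 < u) (hu1 : u ≤ 1) :
    u ^ t * (1 - u) ^ 4 * log u ^ 2 ≤ u ^ t * ((1 - s * u) / (1 + s * u) ^ 3) * log (s * u) ^ 2 := by
  have hsu : s * u ≤ 1 := by nlinarith
  have hweight := div_nonneg (by linarith : 0 ≤ 1 - s * u) (by positivity : 0 ≤ (1 + s * u) ^ 3)
  have hpow := rpow_nonneg hu0.le t
  have hpoly := one_sub_pow_four_le hs0.le hs1 hu0.le hu1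
  have hlog := sq_log_le_sq_log_mul hs0 hs1 hu0 hu1
  gcongr

theorem mul_div_mul_sub_sq_div_lt {p s a : ℝ} (hp : 0 < p) (hs0 : 0 < s) (hs1 : s < 1) :
    s * p ^ 3 / (p + 1) ^ 2 * (1 / (p + 1) ^ 2 - a ^ 2 / p ^ 2) < p ^ 3 / (p + 1) ^ 4 := by
  have hX : 0 < p ^ 3 / (p + 1) ^ 4 := by positivity
  have h : s * p ^ 3 / (p + 1) ^ 2 * (1 / (p + 1) ^ 2 - a ^ 2 / p ^ 2)
      = s * (p ^ 3 / (p + 1) ^ 4) - s * p * a ^ 2 / (p + 1) ^ 2 := by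
    field_simp
  rw [h]
  nlinarith [show 0 ≤ s * p * a ^ 2 / (p + 1) ^ 2 by positivity]

theorem lemma_tan_estimate (p s : ℝ) (hp : 1 < p) (hs0 : 0 < s) (hs1 : s < 1) :
    s * p ^ 3 / (p + 1) ^ 2 * (1 / (p + 1) ^ 2 - (Real.log s) ^ 2 / p ^ 2)
      < ∫ u in (0:ℝ)..1, u ^ (1 / p) * ((1 - s * u) / (1 + s * u) ^ 3)
          * (Real.log (s * u)) ^ 2 := by
  have hp0 : 0 < p := by linarith
  have ht0 : 0 < 1 / p := by positivity
  have ht1 : 1 / p ≤ 1 := by rw [div_le_one hp0]; exact hp.le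
  have hrpow : ContinuousOn (fun u : ℝ => u ^ (1 / p)) (uIcc 0 1) :=
    (continuous_rpow_const ht0.le).continuousOn
  calc s * p ^ 3 / (p + 1) ^ 2 * (1 / (p + 1) ^ 2 - (Real.log s) ^ 2 / p ^ 2)
      < p ^ 3 / (p + 1) ^ 4 := mul_div_mul_sub_sq_div_lt hp0 hs0 hs1
    _ = 1 / p / (1 / p + 1) ^ 4 := by field_simp; ring
    _ < ∫ u in (0:ℝ)..1, u ^ (1 / p) * (1 - u) ^ 4 * log u ^ 2 := by
        rw [integral_rpow_mul_one_sub_pow_four_mul_log_sq (by linarith)]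
        exact div_add_one_pow_four_lt ht0 ht1
    _ ≤ _ := by
        refine integral_mono_on_of_le_Ioo zero_le_one ?_ ?_
          fun u hu => rpow_mul_one_sub_pow_four_mul_log_sq_le hs0 hs1.le hu.1 hu.2.le
        · exact intervalIntegrable_log_sq.continuousOn_mul (hrpow.mul (by fun_prop))
        · refine (intervalIntegrable_log_mul_sq hs0 hs1.le).continuousOn_mul
            (hrpow.mul (ContinuousOn.div (by fun_prop) (by fun_prop) fun u hu => ?_))
          obtain ⟨hu0, -⟩ : 0 ≤ u ∧ u ≤ 1 := by simpa using hu
          positivity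
end

section
/- For each fixed p > 0 and each x ∈ (0,1), with φ(p,t) = (1-t^p)^{-1/p} and η(p,x) = (1/p²)log(1-x^p) + x^p log x / (p(1-x^p)), the function G(x) = x·η(p,x)²/φ(p,x)^{p-1} - ∫₀ˣ φ''_{pp}(p,t) dt is strictly negative, where φ''_{pp} denotes the second partial derivative of φ in p. -/
/-!
Write `A(t) = t η(p,t)² / φ(p,t)^(p-1)` (`firstTerm`), so that `G(x) = A(x) - ∫₀ˣ φ''_pp`.
Since `A(0) = 0`, `G(x) = ∫₀ˣ (A' - φ''_pp)`, and with `w = t^p` both integrands have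
closed forms in `φ` and `η` whose difference is
`φ''_pp - A' = (φ / p) (w (p η - log t / (1 - w))² - 2 η)`.
This is positive because `η < 0` on `(0,1)`. The integrands stay continuous at `t = 0`
because `t^p log^n t → 0`.
-/

open Real Set MeasureTheory

namespace PArcsin

noncomputable def phi (p t : ℝ) : ℝ := (1 - t ^ p) ^ (-(1 / p))

noncomputable def eta (p t : ℝ) : ℝ :=
  1 / p ^ 2 * log (1 - t ^ p) + t ^ p * log t / (p * (1 - t ^ p))

noncomputable def phiPP (p t : ℝ) : ℝ :=
  phi p t * (eta p t ^ 2 - 2 * eta p t / p + t ^ p * log t ^ 2 / (p * (1 - t ^ p) ^ 2))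

noncomputable def firstTerm (p t : ℝ) : ℝ := t * eta p t ^ 2 / phi p t ^ (p - 1)

noncomputable def firstTermDeriv (p t : ℝ) : ℝ :=
  phi p t * (eta p t ^ 2 * (1 - p * t ^ p) + 2 * eta p t * (t ^ p * log t) / (1 - t ^ p))

variable {p t : ℝ}

lemma one_sub_rpow_pos (hp : 0 < p) (ht : t ∈ Ico 0 1) : 0 < 1 - t ^ p := by
  linarith [rpow_lt_one ht.1 ht.2 hp]

lemma phi_pos (hp : 0 < p) (ht : t ∈ Ico 0 1) : 0 < phi p t :=
  rpow_pos_of_pos (one_sub_rpow_pos hp ht) _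

lemma eta_neg (hp : 0 < p) (ht : t ∈ Ioo 0 1) : eta p t < 0 := by
  have hpow : 0 < t ^ p := rpow_pos_of_pos ht.1 p
  have hw : 0 < 1 - t ^ p := one_sub_rpow_pos hp (Ioo_subset_Ico_self ht)
  have hlog : log (1 - t ^ p) < 0 := log_neg hw (by linarith)
  exact add_neg (mul_neg_of_pos_of_neg (by positivity) hlog)
    (div_neg_of_neg_of_pos (mul_neg_of_pos_of_neg hpow (log_neg ht.1 ht.2)) (by positivity))

lemma hasDerivAt_phi_param (ht : 0 < t) (hp : p ≠ 0) (hw : 0 < 1 - t ^ p) :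
    HasDerivAt (fun q => phi q t) (phi p t * eta p t) p := by
  have hf : HasDerivAt (fun q => 1 - t ^ q) (-(t ^ p * log t)) p :=
    (hasStrictDerivAt_const_rpow ht p).hasDerivAt.const_sub 1
  have hg : HasDerivAt (fun q : ℝ => -(1 / q)) (1 / p ^ 2) p := by
    simpa [one_div, Pi.neg_def] using (hasDerivAt_inv hp).neg
  refine (hf.rpow hg hw).congr_deriv ?_
  rw [rpow_sub_one hw.ne', phi, eta]
  field_simp
  ring

lemma hasDerivAt_eta_param (ht : 0 < t) (hp : p ≠ 0) (hw : 1 - t ^ p ≠ 0) :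
    HasDerivAt (fun q => eta q t)
      (-2 * eta p t / p + t ^ p * log t ^ 2 / (p * (1 - t ^ p) ^ 2)) p := by
  have hpow : HasDerivAt (fun q => t ^ q) (t ^ p * log t) p :=
    (hasStrictDerivAt_const_rpow ht p).hasDerivAt
  have hf : HasDerivAt (fun q => 1 - t ^ q) (-(t ^ p * log t)) p := hpow.const_sub 1
  have hinv : HasDerivAt (fun q : ℝ => 1 / q ^ 2) (-2 / p ^ 3) p := by
    simp only [one_div]
    refine ((hasDerivAt_pow 2 p).inv (pow_ne_zero 2 hp)).congr_deriv ?_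
    field_simp
    ring
  show HasDerivAt (fun q => 1 / q ^ 2 * log (1 - t ^ q) + t ^ q * log t / (q * (1 - t ^ q))) _ p
  refine ((hinv.mul (hf.log hw)).add
    ((hpow.mul_const (log t)).div ((hasDerivAt_id p).mul hf) (mul_ne_zero hp hw))).congr_deriv ?_
  simp only [eta, Pi.mul_apply, id]
  field_simp
  ring

lemma hasDerivAt_eta (hp : p ≠ 0) (ht : 0 < t) (hw : 1 - t ^ p ≠ 0) :
    HasDerivAt (eta p) (t ^ p * log t / (t * (1 - t ^ p) ^ 2)) t := by
  have hpow : HasDerivAt (fun s => s ^ p) (p * t ^ p / t) t := by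
    simpa [rpow_sub_one ht.ne', mul_div_assoc] using hasDerivAt_rpow_const (Or.inl ht.ne')
  have hf : HasDerivAt (fun s => 1 - s ^ p) (-(p * t ^ p / t)) t := hpow.const_sub 1
  refine (((hf.log hw).const_mul (1 / p ^ 2)).add
    ((hpow.mul (hasDerivAt_log ht.ne')).div (hf.const_mul p) (mul_ne_zero hp hw))).congr_deriv ?_
  simp only [Pi.mul_apply]
  field_simp
  ring

lemma deriv_deriv_phi_param (hp : 0 < p) (ht : t ∈ Ioo 0 1) :
    deriv (fun q => deriv (fun r => phi r t) q) p = phiPP p t := by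
  have hderiv : (fun q => deriv (fun r => phi r t) q) =ᶠ[nhds p] fun q => phi q t * eta q t := by
    filter_upwards [Ioi_mem_nhds hp] with q hq
    exact (hasDerivAt_phi_param ht.1 (ne_of_gt hq)
      (one_sub_rpow_pos hq (Ioo_subset_Ico_self ht))).deriv
  have hw := one_sub_rpow_pos hp (Ioo_subset_Ico_self ht)
  rw [hderiv.deriv_eq]
  refine ((hasDerivAt_phi_param ht.1 hp.ne' hw).mul
    (hasDerivAt_eta_param ht.1 hp.ne' hw.ne')).deriv.trans ?_
  rw [phiPP]
  ring

lemma firstTerm_eq (hp : p ≠ 0) (hw : 0 < 1 - t ^ p) :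
    firstTerm p t = t * eta p t ^ 2 * (1 - t ^ p) ^ ((p - 1) / p) := by
  rw [firstTerm, phi, ← rpow_mul hw.le, div_eq_mul_inv _ (_ ^ _), ← rpow_neg hw.le]
  congr 2
  field_simp

lemma hasDerivAt_firstTerm (hp : 0 < p) (ht : t ∈ Ioo 0 1) :
    HasDerivAt (firstTerm p) (firstTermDeriv p t) t := by
  have hw := one_sub_rpow_pos hp (Ioo_subset_Ico_self ht)
  have hEq : firstTerm p =ᶠ[nhds t] fun s => s * eta p s ^ 2 * (1 - s ^ p) ^ ((p - 1) / p) := by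
    filter_upwards [isOpen_Ioo.mem_nhds ht] with s hs
    exact firstTerm_eq hp.ne' (one_sub_rpow_pos hp (Ioo_subset_Ico_self hs))
  have hf : HasDerivAt (fun s => 1 - s ^ p) (-(p * t ^ p / t)) t := by
    simpa [rpow_sub_one ht.1.ne', mul_div_assoc] using
      (hasDerivAt_rpow_const (p := p) (Or.inl ht.1.ne')).const_sub 1
  refine ((((hasDerivAt_id t).mul ((hasDerivAt_eta hp.ne' ht.1 hw.ne').pow 2)).mul
    (hf.rpow_const (p := (p - 1) / p) (Or.inl hw.ne'))).congr_of_eventuallyEq hEq).congr_deriv ?_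
  have hM : (1 - t ^ p) ^ ((p - 1) / p - 1) = phi p t := by
    rw [phi]; congr 1; field_simp; ring
  have hM' : (1 - t ^ p) ^ ((p - 1) / p) = phi p t * (1 - t ^ p) := by
    rw [← hM, rpow_sub_one hw.ne']; field_simp
  simp only [Pi.mul_apply, Pi.pow_apply, id, hM, hM', firstTermDeriv]
  have ht0 : t ≠ 0 := ht.1.ne'
  field_simp
  ring

lemma phiPP_sub_firstTermDeriv (hp : p ≠ 0) (hw : 1 - t ^ p ≠ 0) :
    phiPP p t - firstTermDeriv p t
      = phi p t / p * (t ^ p * (p * eta p t - log t / (1 - t ^ p)) ^ 2 - 2 * eta p t) := by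
  rw [phiPP, firstTermDeriv]
  field_simp
  ring

lemma firstTermDeriv_lt_phiPP (hp : 0 < p) (ht : t ∈ Ioo 0 1) :
    firstTermDeriv p t < phiPP p t := by
  have hpow : 0 < t ^ p := rpow_pos_of_pos ht.1 p
  have hw := one_sub_rpow_pos hp (Ioo_subset_Ico_self ht)
  rw [← sub_pos, phiPP_sub_firstTermDeriv hp.ne' hw.ne']
  refine mul_pos (div_pos (phi_pos hp (Ioo_subset_Ico_self ht)) hp) ?_
  nlinarith [eta_neg hp ht, mul_nonneg hpow.le (sq_nonneg (p * eta p t - log t / (1 - t ^ p)))]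

lemma continuousOn_rpow_mul_log_pow (hp : 0 < p) (n : ℕ) :
    ContinuousOn (fun t => t ^ p * log t ^ n) (Ici 0) := by
  rcases Nat.eq_zero_or_pos n with rfl | hn
  · simpa using continuousOn_id.rpow_const fun _ _ => Or.inr hp.le
  set q := p / n
  have hq : 0 < q := by positivity
  -- `t ^ q * log t = t ^ q * log (t ^ q) / q`, and `s ↦ s * log s` is continuous
  have hcont : ContinuousOn (fun t => (t ^ q * log (t ^ q) / q) ^ n) (Ici 0) :=
    ((continuous_mul_log.comp_continuousOn
      (continuousOn_id.rpow_const fun _ _ => Or.inr hq.le)).div_const q).pow n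
  refine hcont.congr fun t (ht : 0 ≤ t) => ?_
  rcases ht.eq_or_lt with rfl | ht
  · simp [zero_rpow hp.ne', zero_rpow hq.ne', hn.ne']
  · dsimp only
    rw [log_rpow ht, mul_left_comm, mul_div_cancel_left₀ _ hq.ne', mul_pow,
      ← rpow_natCast (t ^ q), ← rpow_mul ht.le, div_mul_cancel₀ _ (by positivity)]

lemma continuousOn_eta (hp : 0 < p) : ContinuousOn (eta p) (Ico 0 1) := by
  have hpow : ContinuousOn (fun t : ℝ => t ^ p) (Ico 0 1) :=
    continuousOn_id.rpow_const fun _ _ => Or.inr hp.le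
  have hlog : ContinuousOn (fun t : ℝ => t ^ p * log t ^ 1) (Ico 0 1) :=
    (continuousOn_rpow_mul_log_pow hp 1).mono Ico_subset_Ici_self
  simp only [pow_one] at hlog
  exact (continuousOn_const.mul ((continuousOn_const.sub hpow).log
      fun t ht => (one_sub_rpow_pos hp ht).ne')).add
    (hlog.div (continuousOn_const.mul (continuousOn_const.sub hpow))
      fun t ht => mul_ne_zero hp.ne' (one_sub_rpow_pos hp ht).ne')

lemma continuousOn_phi (hp : 0 < p) : ContinuousOn (phi p) (Ico 0 1) :=
  (continuousOn_const.sub (continuousOn_id.rpow_const fun _ _ => Or.inr hp.le)).rpow_const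
    fun _ ht => Or.inl (one_sub_rpow_pos hp ht).ne'

lemma continuousOn_phiPP (hp : 0 < p) : ContinuousOn (phiPP p) (Ico 0 1) := by
  have hpow : ContinuousOn (fun t : ℝ => t ^ p) (Ico 0 1) :=
    continuousOn_id.rpow_const fun _ _ => Or.inr hp.le
  have hlog : ContinuousOn (fun t : ℝ => t ^ p * log t ^ 2) (Ico 0 1) :=
    (continuousOn_rpow_mul_log_pow hp 2).mono Ico_subset_Ici_self
  have heta := continuousOn_eta hp
  exact (continuousOn_phi hp).mul
    (((heta.pow 2).sub ((continuousOn_const.mul heta).div_const p)).add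
      (hlog.div (continuousOn_const.mul ((continuousOn_const.sub hpow).pow 2))
        fun t ht => mul_ne_zero hp.ne' (pow_ne_zero 2 (one_sub_rpow_pos hp ht).ne')))

lemma continuousOn_firstTermDeriv (hp : 0 < p) : ContinuousOn (firstTermDeriv p) (Ico 0 1) := by
  have hpow : ContinuousOn (fun t : ℝ => t ^ p) (Ico 0 1) :=
    continuousOn_id.rpow_const fun _ _ => Or.inr hp.le
  have hlog : ContinuousOn (fun t : ℝ => t ^ p * log t ^ 1) (Ico 0 1) :=
    (continuousOn_rpow_mul_log_pow hp 1).mono Ico_subset_Ici_self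
  simp only [pow_one] at hlog
  have heta := continuousOn_eta hp
  exact (continuousOn_phi hp).mul
    (((heta.pow 2).mul (continuousOn_const.sub (continuousOn_const.mul hpow))).add
      (((continuousOn_const.mul heta).mul hlog).div (continuousOn_const.sub hpow)
        fun t ht => (one_sub_rpow_pos hp ht).ne'))

lemma continuousOn_firstTerm (hp : 0 < p) : ContinuousOn (firstTerm p) (Ico 0 1) :=
  (continuousOn_id.mul ((continuousOn_eta hp).pow 2)).div
    ((continuousOn_phi hp).rpow_const fun _ ht => Or.inl (phi_pos hp ht).ne')
    fun _ ht => (rpow_pos_of_pos (phi_pos hp ht) _).ne'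

lemma firstTerm_zero (p : ℝ) : firstTerm p 0 = 0 := by simp [firstTerm]

end PArcsin

open PArcsin

/-- With `φ(p,t) = (1-t^p)^{-1/p}`, `η(p,x) = (1/p²)log(1-x^p) + x^p log x/(p(1-x^p))`,
the function `G(x) = x η² / φ^{p-1} - ∫₀ˣ ∂²φ/∂p² dt` is strictly negative for
`x ∈ (0,1)`. -/
theorem G_negative (p : ℝ) (hp : 0 < p) (x : ℝ) (hx : x ∈ Set.Ioo (0:ℝ) 1) :
    x * ((1 / p ^ 2) * Real.log (1 - x ^ p)
          + x ^ p * Real.log x / (p * (1 - x ^ p))) ^ 2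
        / ((1 - x ^ p) ^ (-(1 / p))) ^ (p - 1)
      - (∫ t in (0:ℝ)..x,
          deriv (fun q => deriv (fun r => (1 - t ^ r) ^ (-(1 / r))) q) p)
      < 0 := by
  change firstTerm p x - ∫ t in (0:ℝ)..x, deriv (fun q => deriv (fun r => phi r t) q) p < 0
  have hIcc : Icc 0 x ⊆ Ico 0 1 := Icc_subset_Ico_right hx.2
  have hIoo : Ioo 0 x ⊆ Ioo 0 1 := Ioo_subset_Ioo_right hx.2.le
  have hE : IntervalIntegrable (phiPP p) volume 0 x :=
    ((continuousOn_phiPP hp).mono hIcc).intervalIntegrable_of_Icc hx.1.le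
  have hD : IntervalIntegrable (firstTermDeriv p) volume 0 x :=
    ((continuousOn_firstTermDeriv hp).mono hIcc).intervalIntegrable_of_Icc hx.1.le
  have hintegrand : ∫ t in (0:ℝ)..x, deriv (fun q => deriv (fun r => phi r t) q) p
      = ∫ t in (0:ℝ)..x, phiPP p t := by
    refine intervalIntegral.integral_congr_ae (Filter.Eventually.of_forall fun t ht => ?_)
    rw [uIoc_of_le hx.1.le] at ht
    exact deriv_deriv_phi_param hp ⟨ht.1, ht.2.trans_lt hx.2⟩
  have hFTC : ∫ t in (0:ℝ)..x, firstTermDeriv p t = firstTerm p x := by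
    rw [intervalIntegral.integral_eq_sub_of_hasDerivAt_of_le hx.1.le
      ((continuousOn_firstTerm hp).mono hIcc) (fun t ht => hasDerivAt_firstTerm hp (hIoo ht)) hD,
      firstTerm_zero, sub_zero]
  have hgap : 0 < ∫ t in (0:ℝ)..x, phiPP p t - firstTermDeriv p t :=
    intervalIntegral.intervalIntegral_pos_of_pos_on (hE.sub hD)
      (fun t ht => sub_pos.2 (firstTermDeriv_lt_phiPP hp (hIoo ht))) hx.1
  rw [intervalIntegral.integral_sub hE hD, hFTC] at hgap
  rw [hintegrand]
  linarith
end

section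
/- For p > 0 and x ∈ (0,1), the inequality 2x^p log(x)/(p²(1-x^p)) + (2/p³)·log(1-x^p) - (x^p/p)·(log((1-x^p)^{1/p}) - log x)² < 0 holds. -/
open Real Set

theorem Gprime_bracket_neg (p x : ℝ) (hp : 0 < p) (hx : x ∈ Set.Ioo (0:ℝ) 1) :
    2 * x ^ p * Real.log x / (p ^ 2 * (1 - x ^ p))
      + (2 / p ^ 3) * Real.log (1 - x ^ p)
      - (x ^ p / p) * (Real.log ((1 - x ^ p) ^ (1 / p)) - Real.log x) ^ 2
      < 0 := by
  obtain ⟨hx0, hx1⟩ := hx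
  have ht0 : 0 < x ^ p := Real.rpow_pos_of_pos hx0 p
  have ht1 : x ^ p < 1 := Real.rpow_lt_one hx0.le hx1 hp
  have hlx : Real.log x < 0 := Real.log_neg hx0 hx1
  have hl1 : Real.log (1 - x ^ p) < 0 := Real.log_neg (by linarith) (by linarith)
  have h1 : 2 * x ^ p * Real.log x / (p ^ 2 * (1 - x ^ p)) < 0 := by
    apply div_neg_of_neg_of_pos
    · nlinarith
    · exact mul_pos (pow_pos hp 2) (by linarith)
  have h2 : (2 / p ^ 3) * Real.log (1 - x ^ p) < 0 :=
    mul_neg_of_pos_of_neg (by positivity) hl1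
  have h3 : 0 ≤ (x ^ p / p) * (Real.log ((1 - x ^ p) ^ (1 / p)) - Real.log x) ^ 2 := by
    positivity
  linarith
end

section
/- For each fixed y ∈ (0,1), the function p ↦ sin_p(y) is strictly log-concave on (0,∞); in particular, for p > 2 and y ∈ (0,1), (sin_p y)² > sin_{p-1}(y)·sin_{p+1}(y). -/
/-!
Fix `y` and let `x_p ∈ (0,1)` solve `F_p(x_p) = y`, where `F_p(x) = ∫₀ˣ g_p` with
`g_p(t) = (1 - t^p)^(-1/p)`; then `sin_p y = x_p`. For `p = a p₁ + b p₂` it suffices, `F_p`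
being increasing, to show `F_p(x_{p₁}^a x_{p₂}^b) < y`. Writing `F_p(x) = x ∫₀¹ g_p(x v) dv`,
this follows from Hölder's inequality and the pointwise bound
`g_p(t₁^a t₂^b) < g_{p₁}(t₁)^a g_{p₂}(t₂)^b`. For the latter, `g_p(t)` decreases in `p` and the
weighted harmonic mean `P` of `p₁, p₂` is below `p`; at `P` the bound becomes
`r₁^w₁ r₂^w₂ + (1 - r₁)^w₁ (1 - r₂)^w₂ ≤ 1` with `r_i = t_i^{p_i}`, which is weighted AM-GM
applied twice.
-/

open Real Set MeasureTheory

theorem integral_rpow_mul_rpow_le {α : Type*} [MeasurableSpace α] {μ : Measure α} {f g : α → ℝ}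
    (hf : 0 ≤ᵐ[μ] f) (hg : 0 ≤ᵐ[μ] g) (hfi : Integrable f μ) (hgi : Integrable g μ)
    {a b : ℝ} (ha : 0 < a) (hb : 0 < b) (hab : a + b = 1) :
    ∫ x, f x ^ a * g x ^ b ∂μ ≤ (∫ x, f x ∂μ) ^ a * (∫ x, g x ∂μ) ^ b := by
  have hmemLp {h : α → ℝ} (hh : 0 ≤ᵐ[μ] h) (hhi : Integrable h μ) {c : ℝ} (hc : 0 < c) :
      MemLp (fun x => h x ^ c) (ENNReal.ofReal (1 / c)) μ := by
    have := (memLp_one_iff_integrable.2 hhi).norm_rpow_div (ENNReal.ofReal c)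
    rw [ENNReal.toReal_ofReal hc.le, ← ENNReal.ofReal_one, ← ENNReal.ofReal_div_of_pos hc] at this
    refine this.congr_norm (hhi.aemeasurable.pow_const c).aestronglyMeasurable ?_
    filter_upwards [hh] with x hx
    simp [Real.norm_of_nonneg hx]
  have hpow {h : α → ℝ} (hh : 0 ≤ᵐ[μ] h) {c : ℝ} (hc : 0 < c) :
      ∫ x, (h x ^ c) ^ (1 / c) ∂μ = ∫ x, h x ∂μ := by
    refine integral_congr_ae ?_
    filter_upwards [hh] with x hx
    rw [← rpow_mul hx, mul_one_div_cancel hc.ne', rpow_one]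
  have := integral_mul_le_Lp_mul_Lq_of_nonneg (holderConjugate_one_div ha hb hab)
    (hf.mono fun x hx => rpow_nonneg hx a) (hg.mono fun x hx => rpow_nonneg hx b)
    (hmemLp hf hfi ha) (hmemLp hg hgi hb)
  rwa [hpow hf ha, hpow hg hb, one_div_one_div, one_div_one_div] at this

theorem harm_mean_lt_arith_mean2_weighted {p₁ p₂ a b : ℝ} (hp₁ : 0 < p₁) (hp₂ : 0 < p₂)
    (hne : p₁ ≠ p₂) (ha : 0 < a) (hb : 0 < b) (hab : a + b = 1) :
    1 / (a / p₁ + b / p₂) < a * p₁ + b * p₂ := by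
  have key : (a * p₁ + b * p₂) * (a / p₁ + b / p₂)
      = (a + b) ^ 2 + a * b * (p₁ - p₂) ^ 2 / (p₁ * p₂) := by
    field_simp
    ring
  have hpos : 0 < a * b * (p₁ - p₂) ^ 2 / (p₁ * p₂) := by
    have := sub_ne_zero.2 hne
    positivity
  rw [div_lt_iff₀ (by positivity), key, hab]
  linarith

theorem one_sub_rpow_mul_one_sub_rpow_le {r₁ r₂ a b : ℝ} (hr₁ : r₁ ∈ Icc 0 1)
    (hr₂ : r₂ ∈ Icc 0 1) (ha : 0 ≤ a) (hb : 0 ≤ b) (hab : a + b = 1) :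
    (1 - r₁) ^ a * (1 - r₂) ^ b ≤ 1 - r₁ ^ a * r₂ ^ b := by
  have h := geom_mean_le_arith_mean2_weighted ha hb hr₁.1 hr₂.1 hab
  have h' := geom_mean_le_arith_mean2_weighted ha hb (sub_nonneg.2 hr₁.2) (sub_nonneg.2 hr₂.2) hab
  linear_combination h + h' + hab

theorem rpow_mul_rpow_mem_Ioo {t₁ t₂ a b : ℝ} (ht₁ : t₁ ∈ Ioo 0 1) (ht₂ : t₂ ∈ Ioo 0 1)
    (ha : 0 < a) (hb : 0 < b) : t₁ ^ a * t₂ ^ b ∈ Ioo 0 1 := by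
  have h₁ := rpow_pos_of_pos ht₁.1 a
  have h₂ := rpow_pos_of_pos ht₂.1 b
  have h₁' := rpow_lt_one ht₁.1.le ht₁.2 ha
  have h₂' := rpow_lt_one ht₂.1.le ht₂.2 hb
  exact ⟨by positivity, by nlinarith⟩

theorem mul_mem_Ico_of_mem_Icc {x v : ℝ} (hx : x ∈ Ico 0 1) (hv : v ∈ Icc 0 1) :
    x * v ∈ Ico 0 1 :=
  ⟨mul_nonneg hx.1 hv.1, (mul_le_of_le_one_right hx.1 hv.2).trans_lt hx.2⟩

theorem one_le_one_sub_rpow_rpow {p t : ℝ} (hp : 0 < p) (ht : t ∈ Ico 0 1) :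
    1 ≤ (1 - t ^ p) ^ (-(1 / p)) := by
  have := rpow_nonneg ht.1 p
  have := rpow_lt_one ht.1 ht.2 hp
  exact one_le_rpow_of_pos_of_le_one_of_nonpos (by linarith) (by linarith)
    (neg_nonpos.2 (by positivity))

theorem one_sub_rpow_rpow_lt_of_lt {p q t : ℝ} (hp : 0 < p) (hpq : p < q) (ht : t ∈ Ioo 0 1) :
    (1 - t ^ q) ^ (-(1 / q)) < (1 - t ^ p) ^ (-(1 / p)) := by
  have htqp : t ^ q < t ^ p := rpow_lt_rpow_of_exponent_gt ht.1 ht.2 hpq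
  have htp : t ^ p < 1 := rpow_lt_one ht.1.le ht.2 hp
  have htp0 : 0 < t ^ p := rpow_pos_of_pos ht.1 p
  calc (1 - t ^ q) ^ (-(1 / q)) ≤ (1 - t ^ p) ^ (-(1 / q)) :=
        rpow_le_rpow_of_nonpos (by linarith) (by linarith)
          (neg_nonpos.2 (one_div_pos.2 (hp.trans hpq)).le)
    _ < (1 - t ^ p) ^ (-(1 / p)) :=
        rpow_lt_rpow_of_exponent_gt (by linarith) (by linarith)
          (neg_lt_neg (one_div_lt_one_div_of_lt hp hpq))

theorem one_sub_rpow_rpow_geom_mean_lt {p₁ p₂ t₁ t₂ a b : ℝ} (hp₁ : 0 < p₁) (hp₂ : 0 < p₂)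
    (hne : p₁ ≠ p₂) (ht₁ : t₁ ∈ Ioo 0 1) (ht₂ : t₂ ∈ Ioo 0 1) (ha : 0 < a) (hb : 0 < b)
    (hab : a + b = 1) :
    (1 - (t₁ ^ a * t₂ ^ b) ^ (a * p₁ + b * p₂)) ^ (-(1 / (a * p₁ + b * p₂))) <
      ((1 - t₁ ^ p₁) ^ (-(1 / p₁))) ^ a * ((1 - t₂ ^ p₂) ^ (-(1 / p₂))) ^ b := by
  -- `1 / S` is the weighted harmonic mean of `p₁` and `p₂`.
  obtain ⟨S, hS⟩ : ∃ S, S = a / p₁ + b / p₂ := ⟨_, rfl⟩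
  have hS0 : 0 < S := hS ▸ by positivity
  obtain ⟨w₁, hw₁⟩ : ∃ w, w = a / (p₁ * S) := ⟨_, rfl⟩
  obtain ⟨w₂, hw₂⟩ : ∃ w, w = b / (p₂ * S) := ⟨_, rfl⟩
  have hw : w₁ + w₂ = 1 := by
    rw [hw₁, hw₂, hS]
    field_simp
  have ht := rpow_mul_rpow_mem_Ioo ht₁ ht₂ ha hb
  have hr {t p : ℝ} (ht : t ∈ Ioo 0 1) (hp : 0 < p) : t ^ p ∈ Icc 0 1 :=
    ⟨rpow_nonneg ht.1.le p, (rpow_lt_one ht.1.le ht.2 hp).le⟩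
  have hpow : (t₁ ^ a * t₂ ^ b) ^ (1 / S) = (t₁ ^ p₁) ^ w₁ * (t₂ ^ p₂) ^ w₂ := by
    rw [mul_rpow (rpow_nonneg ht₁.1.le a) (rpow_nonneg ht₂.1.le b), ← rpow_mul ht₁.1.le,
      ← rpow_mul ht₂.1.le, ← rpow_mul ht₁.1.le, ← rpow_mul ht₂.1.le]
    congr 2
    · rw [hw₁]; field_simp
    · rw [hw₂]; field_simp
  calc (1 - (t₁ ^ a * t₂ ^ b) ^ (a * p₁ + b * p₂)) ^ (-(1 / (a * p₁ + b * p₂)))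
      < (1 - (t₁ ^ a * t₂ ^ b) ^ (1 / S)) ^ (-(1 / (1 / S))) :=
        one_sub_rpow_rpow_lt_of_lt (by positivity)
          (hS ▸ harm_mean_lt_arith_mean2_weighted hp₁ hp₂ hne ha hb hab) ht
    _ = (1 - (t₁ ^ p₁) ^ w₁ * (t₂ ^ p₂) ^ w₂) ^ (-S) := by rw [hpow, one_div_one_div]
    _ ≤ ((1 - t₁ ^ p₁) ^ w₁ * (1 - t₂ ^ p₂) ^ w₂) ^ (-S) := by
        refine rpow_le_rpow_of_nonpos ?_ (one_sub_rpow_mul_one_sub_rpow_le (hr ht₁ hp₁)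
          (hr ht₂ hp₂) (hw₁ ▸ by positivity) (hw₂ ▸ by positivity) hw) (neg_nonpos.2 hS0.le)
        have h₁ := rpow_lt_one ht₁.1.le ht₁.2 hp₁
        have h₂ := rpow_lt_one ht₂.1.le ht₂.2 hp₂
        have : 0 < 1 - t₁ ^ p₁ := by linarith
        have : 0 < 1 - t₂ ^ p₂ := by linarith
        positivity
    _ = ((1 - t₁ ^ p₁) ^ (-(1 / p₁))) ^ a * ((1 - t₂ ^ p₂) ^ (-(1 / p₂))) ^ b := by
        have h₁ : 0 ≤ 1 - t₁ ^ p₁ := sub_nonneg.2 (hr ht₁ hp₁).2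
        have h₂ : 0 ≤ 1 - t₂ ^ p₂ := sub_nonneg.2 (hr ht₂ hp₂).2
        rw [mul_rpow (rpow_nonneg h₁ _) (rpow_nonneg h₂ _), ← rpow_mul h₁, ← rpow_mul h₂,
          ← rpow_mul h₁, ← rpow_mul h₂]
        congr 2
        · rw [hw₁]; field_simp
        · rw [hw₂]; field_simp

theorem continuousOn_one_sub_rpow_rpow {p : ℝ} (hp : 0 < p) :
    ContinuousOn (fun t : ℝ => (1 - t ^ p) ^ (-(1 / p))) (Ico 0 1) := by
  refine ContinuousOn.rpow_const (fun t _ => ?_) fun t ht => Or.inl ?_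
  · exact (continuousAt_const.sub (continuousAt_rpow_const t p (Or.inr hp.le))).continuousWithinAt
  · exact (sub_pos.2 (rpow_lt_one ht.1 ht.2 hp)).ne'

theorem continuousOn_one_sub_mul_rpow_rpow {p x : ℝ} (hp : 0 < p) (hx : x ∈ Ico 0 1) :
    ContinuousOn (fun v : ℝ => (1 - (x * v) ^ p) ^ (-(1 / p))) (Icc 0 1) :=
  (continuousOn_one_sub_rpow_rpow hp).comp (continuousOn_const.mul continuousOn_id)
    fun _ hv => mul_mem_Ico_of_mem_Icc hx hv

noncomputable def arcsinp (p x : ℝ) : ℝ := ∫ t in (0:ℝ)..x, (1 - t ^ p) ^ (-(1 / p))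

theorem intervalIntegrable_one_sub_rpow_rpow {p x : ℝ} (hp : 0 < p) (hx : x ∈ Ico 0 1) :
    IntervalIntegrable (fun t : ℝ => (1 - t ^ p) ^ (-(1 / p))) volume 0 x :=
  ((continuousOn_one_sub_rpow_rpow hp).mono (Icc_subset_Ico_right hx.2)).intervalIntegrable_of_Icc
    hx.1

theorem arcsinp_mono {p x x' : ℝ} (hp : 0 < p) (hx : 0 ≤ x) (hxx' : x ≤ x') (hx' : x' < 1) :
    arcsinp p x ≤ arcsinp p x' :=
  intervalIntegral.integral_mono_interval le_rfl hx hxx'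
    ((ae_restrict_mem measurableSet_Ioc).mono fun _ ht =>
      zero_le_one.trans (one_le_one_sub_rpow_rpow hp ⟨ht.1.le, ht.2.trans_lt hx'⟩))
    (intervalIntegrable_one_sub_rpow_rpow hp ⟨hx.trans hxx', hx'⟩)

theorem le_arcsinp {p x : ℝ} (hp : 0 < p) (hx : x ∈ Ico 0 1) : x ≤ arcsinp p x := by
  have := intervalIntegral.integral_mono_on hx.1 intervalIntegrable_const
    (intervalIntegrable_one_sub_rpow_rpow hp hx)
    fun t ht => one_le_one_sub_rpow_rpow hp ⟨ht.1, ht.2.trans_lt hx.2⟩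
  simpa [arcsinp] using this

theorem exists_arcsinp_eq {p y : ℝ} (hp : 0 < p) (hy : y ∈ Ioo 0 1) :
    ∃ x ∈ Ioo 0 1, arcsinp p x = y := by
  have hcont : ContinuousOn (arcsinp p) (Icc 0 y) := by
    have := intervalIntegral.continuousOn_primitive_interval'
      (intervalIntegrable_one_sub_rpow_rpow hp ⟨hy.1.le, hy.2⟩) left_mem_uIcc
    rwa [uIcc_of_le hy.1.le] at this
  obtain ⟨x, hx, hxy⟩ := intermediate_value_Icc hy.1.le hcont
    ⟨by simp [arcsinp, hy.1.le], le_arcsinp hp ⟨hy.1.le, hy.2⟩⟩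
  refine ⟨x, ⟨hx.1.lt_of_ne ?_, hx.2.trans_lt hy.2⟩, hxy⟩
  rintro rfl
  simp [arcsinp] at hxy
  exact hy.1.ne hxy

theorem arcsinp_eq_mul_integral (p : ℝ) {x : ℝ} (hx : x ≠ 0) :
    arcsinp p x = x * ∫ v in (0:ℝ)..1, (1 - (x * v) ^ p) ^ (-(1 / p)) := by
  rw [intervalIntegral.integral_comp_mul_left (fun t => (1 - t ^ p) ^ (-(1 / p))) hx]
  simp [arcsinp, hx]

theorem arcsinp_geom_mean_lt {p₁ p₂ x₁ x₂ a b y : ℝ} (hp₁ : 0 < p₁) (hp₂ : 0 < p₂)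
    (hne : p₁ ≠ p₂) (hx₁ : x₁ ∈ Ioo 0 1) (hx₂ : x₂ ∈ Ioo 0 1) (ha : 0 < a) (hb : 0 < b)
    (hab : a + b = 1) (h₁ : arcsinp p₁ x₁ = y) (h₂ : arcsinp p₂ x₂ = y) :
    arcsinp (a * p₁ + b * p₂) (x₁ ^ a * x₂ ^ b) < y := by
  set x := x₁ ^ a * x₂ ^ b
  set p := a * p₁ + b * p₂
  have hx : x ∈ Ioo 0 1 := rpow_mul_rpow_mem_Ioo hx₁ hx₂ ha hb
  set g : ℝ → ℝ → ℝ → ℝ := fun p x v => (1 - (x * v) ^ p) ^ (-(1 / p))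
  have hg_pos {q z v : ℝ} (hq : 0 < q) (hz : z ∈ Ioo 0 1) (hv : v ∈ Icc 0 1) : 0 < g q z v :=
    one_pos.trans_le
      (one_le_one_sub_rpow_rpow hq (mul_mem_Ico_of_mem_Icc (Ioo_subset_Ico_self hz) hv))
  have hg_cont {q z : ℝ} (hq : 0 < q) (hz : z ∈ Ioo 0 1) : ContinuousOn (g q z) (Icc 0 1) :=
    continuousOn_one_sub_mul_rpow_rpow hq (Ioo_subset_Ico_self hz)
  have hpointwise : ∀ v ∈ Ioc (0:ℝ) 1, g p x v < g p₁ x₁ v ^ a * g p₂ x₂ v ^ b := by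
    intro v hv
    have hsplit : (x₁ * v) ^ a * (x₂ * v) ^ b = x * v := by
      rw [mul_rpow hx₁.1.le hv.1.le, mul_rpow hx₂.1.le hv.1.le, mul_mul_mul_comm,
        ← rpow_add hv.1, hab, rpow_one]
    have hmem {z : ℝ} (hz : z ∈ Ioo 0 1) : z * v ∈ Ioo 0 1 :=
      ⟨mul_pos hz.1 hv.1, (mul_le_of_le_one_right hz.1.le hv.2).trans_lt hz.2⟩
    have := one_sub_rpow_rpow_geom_mean_lt hp₁ hp₂ hne (hmem hx₁) (hmem hx₂) ha hb hab
    rwa [hsplit] at this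
  have hlt : ∫ v in (0:ℝ)..1, g p x v < ∫ v in (0:ℝ)..1, g p₁ x₁ v ^ a * g p₂ x₂ v ^ b := by
    refine intervalIntegral.integral_lt_integral_of_continuousOn_of_le_of_exists_lt zero_lt_one
      (hg_cont (by positivity) hx) ?_ (fun v hv => (hpointwise v hv).le)
      ⟨1, right_mem_Icc.2 zero_le_one, hpointwise 1 (right_mem_Ioc.2 zero_lt_one)⟩
    exact ((hg_cont hp₁ hx₁).rpow_const fun v hv => Or.inl (hg_pos hp₁ hx₁ hv).ne').mul
      ((hg_cont hp₂ hx₂).rpow_const fun v hv => Or.inl (hg_pos hp₂ hx₂ hv).ne')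
  have hholder : ∫ v in (0:ℝ)..1, g p₁ x₁ v ^ a * g p₂ x₂ v ^ b ≤
      (∫ v in (0:ℝ)..1, g p₁ x₁ v) ^ a * (∫ v in (0:ℝ)..1, g p₂ x₂ v) ^ b := by
    simp only [intervalIntegral.integral_of_le zero_le_one]
    have hnonneg {q z : ℝ} (hq : 0 < q) (hz : z ∈ Ioo 0 1) :
        0 ≤ᵐ[volume.restrict (Ioc 0 1)] g q z :=
      (ae_restrict_mem measurableSet_Ioc).mono fun v hv =>
        (hg_pos hq hz (Ioc_subset_Icc_self hv)).le
    have hint {q z : ℝ} (hq : 0 < q) (hz : z ∈ Ioo 0 1) :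
        Integrable (g q z) (volume.restrict (Ioc 0 1)) :=
      (hg_cont hq hz).integrableOn_Icc.mono_set Ioc_subset_Icc_self
    exact integral_rpow_mul_rpow_le (hnonneg hp₁ hx₁) (hnonneg hp₂ hx₂) (hint hp₁ hx₁)
      (hint hp₂ hx₂) ha hb hab
  have hI {q z : ℝ} (hq : 0 < q) (hz : z ∈ Ioo 0 1) : 0 ≤ ∫ v in (0:ℝ)..1, g q z v :=
    intervalIntegral.integral_nonneg zero_le_one fun v hv => (hg_pos hq hz hv).le
  have hy : 0 ≤ y := h₁ ▸ hx₁.1.le.trans (le_arcsinp hp₁ (Ioo_subset_Ico_self hx₁))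
  calc arcsinp p x = x * ∫ v in (0:ℝ)..1, g p x v := arcsinp_eq_mul_integral p hx.1.ne'
    _ < x * ((∫ v in (0:ℝ)..1, g p₁ x₁ v) ^ a * (∫ v in (0:ℝ)..1, g p₂ x₂ v) ^ b) :=
      mul_lt_mul_of_pos_left (hlt.trans_le hholder) hx.1
    _ = (x₁ * ∫ v in (0:ℝ)..1, g p₁ x₁ v) ^ a * (x₂ * ∫ v in (0:ℝ)..1, g p₂ x₂ v) ^ b := by
      rw [mul_rpow hx₁.1.le (hI hp₁ hx₁), mul_rpow hx₂.1.le (hI hp₂ hx₂)]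
      ring
    _ = y := by
      rw [← arcsinp_eq_mul_integral p₁ hx₁.1.ne', ← arcsinp_eq_mul_integral p₂ hx₂.1.ne', h₁, h₂,
        ← rpow_add' hy (by rw [hab]; exact one_ne_zero), hab, rpow_one]

theorem strictConcaveOn_log_of_arcsinp_eq {s : ℝ → ℝ} {y : ℝ}
    (hs : ∀ p, 0 < p → s p ∈ Ioo 0 1 ∧ arcsinp p (s p) = y) :
    StrictConcaveOn ℝ (Ioi 0) fun p => log (s p) := by
  refine ⟨convex_Ioi 0, fun p₁ hp₁ p₂ hp₂ hne a b ha hb hab => ?_⟩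
  have hp : 0 < a * p₁ + b * p₂ := add_pos (mul_pos ha hp₁) (mul_pos hb hp₂)
  obtain ⟨hx₁, h₁⟩ := hs p₁ hp₁
  obtain ⟨hx₂, h₂⟩ := hs p₂ hp₂
  obtain ⟨hx, h⟩ := hs _ hp
  have hlt : s p₁ ^ a * s p₂ ^ b < s (a * p₁ + b * p₂) := by
    by_contra! hge
    have := arcsinp_mono hp hx.1.le hge (rpow_mul_rpow_mem_Ioo hx₁ hx₂ ha hb).2
    have := arcsinp_geom_mean_lt hp₁ hp₂ hne hx₁ hx₂ ha hb hab h₁ h₂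
    linarith
  calc a • log (s p₁) + b • log (s p₂) = log (s p₁ ^ a * s p₂ ^ b) := by
        rw [log_mul (rpow_pos_of_pos hx₁.1 a).ne' (rpow_pos_of_pos hx₂.1 b).ne',
          log_rpow hx₁.1, log_rpow hx₂.1, smul_eq_mul, smul_eq_mul]
    _ < log (s (a • p₁ + b • p₂)) := log_lt_log (rpow_mul_rpow_mem_Ioo hx₁ hx₂ ha hb).1 hlt

theorem mul_lt_sq_of_strictConcaveOn_log {s : ℝ → ℝ} (hs : ∀ p, 0 < p → 0 < s p)
    (hconc : StrictConcaveOn ℝ (Ioi 0) fun p => log (s p)) {p : ℝ} (hp : 1 < p) :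
    s (p - 1) * s (p + 1) < s p ^ 2 := by
  have hlo : 0 < s (p - 1) := hs _ (by linarith)
  have hhi : 0 < s (p + 1) := hs _ (by linarith)
  have h := hconc.2 (show 0 < p - 1 by linarith) (show 0 < p + 1 by linarith) (by linarith)
    one_half_pos one_half_pos (add_halves 1)
  have hmid : (1 / 2 : ℝ) • (p - 1) + (1 / 2 : ℝ) • (p + 1) = p := by
    simp only [smul_eq_mul]
    ring
  rw [hmid, smul_eq_mul, smul_eq_mul] at h
  rw [← log_lt_log_iff (mul_pos hlo hhi) (pow_pos (hs p (by linarith)) 2), log_mul hlo.ne' hhi.ne',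
    log_pow, Nat.cast_ofNat]
  linarith

/-- For fixed `y ∈ (0,1)`, `p ↦ sin_p y` is strictly log-concave on `(0,∞)`;
in particular the Turán inequality `(sin_p y)² > sin_{p-1} y · sin_{p+1} y`
holds for `p > 2`.  Here `sinp p` is the inverse of
`x ↦ ∫₀ˣ (1-t^p)^{-1/p} dt` on `[0,1)`. -/
theorem sinp_log_concave (sinp : ℝ → ℝ → ℝ)
    (hinv : ∀ p : ℝ, 0 < p → ∀ x ∈ Set.Ico (0:ℝ) 1,
      sinp p (∫ t in (0:ℝ)..x, (1 - t ^ p) ^ (-(1 / p))) = x)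
    (y : ℝ) (hy : y ∈ Set.Ioo (0:ℝ) 1) :
    StrictConcaveOn ℝ (Set.Ioi (0:ℝ)) (fun p => Real.log (sinp p y)) ∧
    ∀ p : ℝ, 2 < p → sinp (p - 1) y * sinp (p + 1) y < (sinp p y) ^ 2 := by
  have hs : ∀ p, 0 < p → sinp p y ∈ Ioo 0 1 ∧ arcsinp p (sinp p y) = y := by
    intro p hp
    obtain ⟨x, hx, rfl⟩ := exists_arcsinp_eq hp hy
    rw [arcsinp, hinv p hp x (Ioo_subset_Ico_self hx)]
    exact ⟨hx, rfl⟩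
  have hconc := strictConcaveOn_log_of_arcsinp_eq hs
  exact ⟨hconc, fun p hp => mul_lt_sq_of_strictConcaveOn_log (fun p hp => (hs p hp).1.1) hconc
    (by linarith)⟩
end

section
/- For each fixed y ∈ (0,∞), the function p ↦ sinh_p(y) is strictly log-convex on (0,∞); in particular, for p > 1 and y > 0, (sinh_p y)² < sinh_{p-1}(y)·sinh_{p+1}(y) when p - 1 > 0. -/
/-!
Write `S_p = sinh_p`, fix `p ≠ q`, `0 < l < 1` and put `r = l p + (1 - l) q`; the claim is
`S_r < C := S_p^l S_q^(1-l)` on `(0, ∞)`. Since `S_p' = (1 + S_p^p)^(1/p)`, weighted AM-GM gives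
`C' ≥ (S_p')^l (S_q')^(1-l)`, and this exceeds `(1 + C^r)^(1/r)` because
`(s, x) ↦ log (1 + e^(s x)) / s`, the logarithm of `(1 + a^s)^(1/s)` at `a = e^x`, is jointly
convex, strictly so when `s` varies. Hence `arcsinh_r ∘ C - id` is strictly increasing; being
`≥ -z` at `z`, it is positive, which says `C > S_r`.
-/

open Real Set MeasureTheory intervalIntegral

lemma exists_hasDerivAt_rpow_mul_rpow_ge {f g : ℝ → ℝ} {f' g' l z : ℝ}
    (hf : HasDerivAt f f' z) (hg : HasDerivAt g g' z) (hf0 : 0 < f z) (hg0 : 0 < g z)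
    (hf' : 0 ≤ f') (hg' : 0 ≤ g') (hl0 : 0 ≤ l) (hl1 : l ≤ 1) :
    ∃ d, HasDerivAt (fun x => f x ^ l * g x ^ (1 - l)) d z ∧ f' ^ l * g' ^ (1 - l) ≤ d := by
  refine ⟨_, (hf.rpow_const (Or.inl hf0.ne')).mul (hg.rpow_const (Or.inl hg0.ne')), ?_⟩
  have amgm := geom_mean_le_arith_mean2_weighted hl0 (sub_nonneg.2 hl1)
    (div_nonneg hf' hf0.le) (div_nonneg hg' hg0.le) (add_sub_cancel l 1)
  calc f' ^ l * g' ^ (1 - l)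
        = f z ^ l * g z ^ (1 - l) * ((f' / f z) ^ l * (g' / g z) ^ (1 - l)) := by
        rw [div_rpow hf' hf0.le, div_rpow hg' hg0.le]
        field_simp
    _ ≤ f z ^ l * g z ^ (1 - l) * (l * (f' / f z) + (1 - l) * (g' / g z)) := by gcongr
    _ = _ := by
        rw [rpow_sub_one hf0.ne', rpow_sub_one hg0.ne']
        field_simp

lemma pos_of_strictMonoOn_of_neg_le {f : ℝ → ℝ} (hf : StrictMonoOn f (Ioi 0))
    (hlow : ∀ z, 0 < z → -z ≤ f z) {y : ℝ} (hy : 0 < y) : 0 < f y := by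
  have hhalf : 0 ≤ f (y / 2) := by
    by_contra! hneg
    set z := min (y / 4) (-f (y / 2) / 2)
    have hz0 : 0 < z := lt_min (by linarith) (by linarith)
    have hlt : f z < f (y / 2) :=
      hf hz0 (half_pos hy) ((min_le_left _ _).trans_lt (by linarith))
    linarith [hlow z hz0, min_le_right (y / 4) (-f (y / 2) / 2)]
  linarith [hf (half_pos hy) hy (half_lt_self hy)]

lemma sq_lt_mul_of_strictConvexOn_log {f : ℝ → ℝ}
    (hf : StrictConvexOn ℝ (Ioi 0) (fun p => log (f p))) (hpos : ∀ p, 0 < p → 0 < f p)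
    {p : ℝ} (hp : 1 < p) : f p ^ 2 < f (p - 1) * f (p + 1) := by
  have hmid := hf.2 (show p - 1 ∈ Ioi 0 by simpa using hp)
    (show p + 1 ∈ Ioi 0 by simp; linarith)
    (by linarith) one_half_pos one_half_pos (add_halves 1)
  simp only [smul_eq_mul] at hmid
  rw [show 1 / 2 * (p - 1) + 1 / 2 * (p + 1) = p by ring] at hmid
  have h1 := hpos (p - 1) (by linarith)
  have h2 := hpos (p + 1) (by linarith)
  rw [← log_lt_log_iff (pow_pos (hpos p (by linarith)) 2) (mul_pos h1 h2), log_pow,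
    log_mul h1.ne' h2.ne']
  push_cast
  linarith

lemma mul_add_binEntropy_le_log_one_add_exp {α : ℝ} (h0 : 0 < α) (h1 : α < 1) (v : ℝ) :
    α * v + binEntropy α ≤ log (1 + exp v) := by
  have h1' : 0 < 1 - α := sub_pos.2 h1
  have hjensen := strictConcaveOn_log_Ioi.concaveOn.2 (x := exp v / α) (y := (1 - α)⁻¹)
    (div_pos (exp_pos v) h0) (inv_pos.2 h1') h0.le h1'.le (add_sub_cancel α 1)
  rw [smul_eq_mul, smul_eq_mul, smul_eq_mul, smul_eq_mul, mul_div_cancel₀ _ h0.ne',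
    mul_inv_cancel₀ h1'.ne', log_div (exp_pos v).ne' h0.ne', log_exp] at hjensen
  rw [binEntropy, add_comm 1 (exp v), log_inv]
  linarith

lemma mul_add_binEntropy_logistic (v : ℝ) :
    exp v / (1 + exp v) * v + binEntropy (exp v / (1 + exp v)) = log (1 + exp v) := by
  have he : 0 < 1 + exp v := by positivity
  have h1 : 1 - exp v / (1 + exp v) = (1 + exp v)⁻¹ := by field_simp; ring
  rw [binEntropy, h1, inv_inv, inv_div, log_div he.ne' (exp_pos v).ne', log_exp]
  field_simp
  ring

-- `log (1 + e^v) = max_α (α v + H(α))`, attained at the logistic `α`; so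
-- `log (1 + e^(s x)) / s` is a supremum of the functions `α x + H(α) / s`, which are convex in
-- `(s, x)` and strictly convex in `s`.
lemma log_one_add_exp_div_lt {p q l u w : ℝ} (hp : 0 < p) (hq : 0 < q) (hpq : p ≠ q)
    (hl0 : 0 < l) (hl1 : l < 1) :
    log (1 + exp ((l * p + (1 - l) * q) * (l * u + (1 - l) * w))) / (l * p + (1 - l) * q) <
      l * (log (1 + exp (p * u)) / p) + (1 - l) * (log (1 + exp (q * w)) / q) := by
  set r := l * p + (1 - l) * q
  set m := l * u + (1 - l) * w
  have hr : 0 < r := by positivity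
  set α := exp (r * m) / (1 + exp (r * m))
  have hα0 : 0 < α := by positivity
  have hα1 : α < 1 := (div_lt_one (by positivity)).2 (lt_one_add _)
  have hH := binEntropy_pos hα0 hα1
  have hinv : 1 / r < l * (1 / p) + (1 - l) * (1 / q) := by
    simpa using (strictConvexOn_zpow (m := -1) (by norm_num) (by norm_num)).2 hp hq hpq hl0
      (sub_pos.2 hl1) (add_sub_cancel l 1)
  have hdual : ∀ s x, 0 < s → α * x + binEntropy α * (1 / s) ≤ log (1 + exp (s * x)) / s :=
    fun s x hs => by
      have hmul : (α * x + binEntropy α * (1 / s)) * s = α * (s * x) + binEntropy α := by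
        field_simp
      rw [le_div_iff₀ hs, hmul]
      exact mul_add_binEntropy_le_log_one_add_exp hα0 hα1 (s * x)
  calc log (1 + exp (r * m)) / r = α * m + binEntropy α * (1 / r) := by
        have hlog : α * (r * m) + binEntropy α = log (1 + exp (r * m)) :=
          mul_add_binEntropy_logistic (r * m)
        rw [← hlog]
        field_simp
    _ < α * m + binEntropy α * (l * (1 / p) + (1 - l) * (1 / q)) := by gcongr
    _ = l * (α * u + binEntropy α * (1 / p)) + (1 - l) * (α * w + binEntropy α * (1 / q)) := by
        ring
    _ ≤ _ := add_le_add (mul_le_mul_of_nonneg_left (hdual p u hp) hl0.le)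
        (mul_le_mul_of_nonneg_left (hdual q w hq) (sub_pos.2 hl1).le)

lemma one_add_rpow_geomMean_lt {p q l a b : ℝ} (hp : 0 < p) (hq : 0 < q) (hpq : p ≠ q)
    (hl0 : 0 < l) (hl1 : l < 1) (ha : 0 < a) (hb : 0 < b) :
    (1 + (a ^ l * b ^ (1 - l)) ^ (l * p + (1 - l) * q)) ^ (1 / (l * p + (1 - l) * q)) <
      ((1 + a ^ p) ^ (1 / p)) ^ l * ((1 + b ^ q) ^ (1 / q)) ^ (1 - l) := by
  obtain ⟨u, rfl⟩ : ∃ u, exp u = a := ⟨log a, exp_log ha⟩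
  obtain ⟨w, rfl⟩ : ∃ w, exp w = b := ⟨log b, exp_log hb⟩
  simp only [← exp_mul, ← exp_add]
  rw [← log_lt_log_iff (by positivity) (by positivity), log_mul (by positivity) (by positivity),
    log_rpow (by positivity), log_rpow (by positivity), log_rpow (by positivity),
    log_rpow (by positivity), log_rpow (by positivity)]
  convert log_one_add_exp_div_lt (u := u) (w := w) hp hq hpq hl0 hl1 using 1 <;> ring_nf

noncomputable section

def pArcsinh (p x : ℝ) : ℝ := ∫ t in (0:ℝ)..x, (1 + t ^ p) ^ (-(1 / p))

-- Only meaningful for `p > 0` and `z ≥ 0`; elsewhere `invFunOn` returns a junk value.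
def pSinh (p : ℝ) : ℝ → ℝ := Function.invFunOn (pArcsinh p) (Ici 0)

section PSinh

variable {p : ℝ}

lemma one_add_rpow_pos {t : ℝ} (ht : 0 ≤ t) : 0 < 1 + t ^ p := by
  have := rpow_nonneg ht p
  linarith

lemma pArcsinh_integrand_pos {t : ℝ} (ht : 0 ≤ t) : 0 < (1 + t ^ p) ^ (-(1 / p)) :=
  rpow_pos_of_pos (one_add_rpow_pos ht) _

lemma continuousOn_pArcsinh_integrand (hp : 0 ≤ p) :
    ContinuousOn (fun t : ℝ => (1 + t ^ p) ^ (-(1 / p))) (Ici 0) :=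
  (continuousOn_const.add (continuousOn_id.rpow_const fun _ _ => Or.inr hp)).rpow_const
    fun _ ht => Or.inl (one_add_rpow_pos ht).ne'

lemma intervalIntegrable_pArcsinh_integrand (hp : 0 ≤ p) {a b : ℝ} (ha : 0 ≤ a)
    (hb : 0 ≤ b) :
    IntervalIntegrable (fun t : ℝ => (1 + t ^ p) ^ (-(1 / p))) volume a b :=
  ((continuousOn_pArcsinh_integrand hp).mono fun _ hx =>
    le_trans (le_inf ha hb) hx.1).intervalIntegrable

@[simp] lemma pArcsinh_zero : pArcsinh p 0 = 0 := integral_same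

lemma strictMonoOn_pArcsinh (hp : 0 ≤ p) : StrictMonoOn (pArcsinh p) (Ici 0) := by
  intro a ha b hb hab
  have hsplit : pArcsinh p a + ∫ t in a..b, (1 + t ^ p) ^ (-(1 / p)) = pArcsinh p b :=
    integral_add_adjacent_intervals (intervalIntegrable_pArcsinh_integrand hp le_rfl ha)
      (intervalIntegrable_pArcsinh_integrand hp ha hb)
  have hpos : 0 < ∫ t in a..b, (1 + t ^ p) ^ (-(1 / p)) :=
    intervalIntegral_pos_of_pos_on (intervalIntegrable_pArcsinh_integrand hp ha hb)
      (fun t ht => pArcsinh_integrand_pos (ha.trans ht.1.le)) hab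
  linarith

lemma pArcsinh_nonneg (hp : 0 ≤ p) {x : ℝ} (hx : 0 ≤ x) : 0 ≤ pArcsinh p x := by
  simpa using (strictMonoOn_pArcsinh hp).monotoneOn self_mem_Ici hx hx

lemma continuousOn_pArcsinh (hp : 0 ≤ p) {X : ℝ} (hX : 0 ≤ X) :
    ContinuousOn (pArcsinh p) (Icc 0 X) := by
  have := continuousOn_primitive_interval' (μ := volume)
    (intervalIntegrable_pArcsinh_integrand hp le_rfl hX) (left_mem_uIcc (a := (0:ℝ)) (b := X))
  rwa [uIcc_of_le hX] at this

lemma hasDerivAt_pArcsinh (hp : 0 ≤ p) {x : ℝ} (hx : 0 < x) :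
    HasDerivAt (pArcsinh p) ((1 + x ^ p) ^ (-(1 / p))) x :=
  integral_hasDerivAt_right (intervalIntegrable_pArcsinh_integrand hp le_rfl hx.le)
    (((continuousOn_pArcsinh_integrand hp).mono Ioi_subset_Ici_self).stronglyMeasurableAtFilter
      isOpen_Ioi x hx)
    ((continuousOn_pArcsinh_integrand hp).continuousAt (Ici_mem_nhds hx))

-- On `[1, x]`, `1 + t^p ≤ 2 t^p`, so the integrand is at least `2^(-1/p) / t`.
lemma mul_log_le_pArcsinh (hp : 0 < p) {x : ℝ} (hx : 1 ≤ x) :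
    2 ^ (-(1 / p)) * log x ≤ pArcsinh p x := by
  have hlow : ∀ t ∈ Icc (1:ℝ) x, 2 ^ (-(1 / p)) * t⁻¹ ≤ (1 + t ^ p) ^ (-(1 / p)) := by
    rintro t ⟨ht1, -⟩
    have ht0 : 0 < t := one_pos.trans_le ht1
    have htp : 1 ≤ t ^ p := one_le_rpow ht1 hp.le
    calc 2 ^ (-(1 / p)) * t⁻¹ = (2 * t ^ p) ^ (-(1 / p)) := by
          rw [mul_rpow zero_le_two (rpow_nonneg ht0.le p), ← rpow_mul ht0.le,
            mul_neg, mul_one_div_cancel hp.ne', rpow_neg_one]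
      _ ≤ (1 + t ^ p) ^ (-(1 / p)) :=
          rpow_le_rpow_of_nonpos (one_add_rpow_pos ht0.le) (by linarith)
            (neg_nonpos.mpr (by positivity))
  have hinvInt : IntervalIntegrable (fun t : ℝ => 2 ^ (-(1 / p)) * t⁻¹) volume 1 x :=
    (intervalIntegral.intervalIntegrable_inv
      (fun t ht => by rw [uIcc_of_le hx] at ht; exact (one_pos.trans_le ht.1).ne')
      continuousOn_id).const_mul _
  have hsplit : pArcsinh p 1 + ∫ t in (1:ℝ)..x, (1 + t ^ p) ^ (-(1 / p)) = pArcsinh p x :=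
    integral_add_adjacent_intervals
      (intervalIntegrable_pArcsinh_integrand hp.le le_rfl zero_le_one)
      (intervalIntegrable_pArcsinh_integrand hp.le zero_le_one (zero_le_one.trans hx))
  have hmono := integral_mono_on hx hinvInt
    (intervalIntegrable_pArcsinh_integrand hp.le zero_le_one (zero_le_one.trans hx)) hlow
  rw [intervalIntegral.integral_const_mul, integral_inv_of_pos one_pos (one_pos.trans_le hx),
    div_one] at hmono
  linarith [pArcsinh_nonneg hp.le zero_le_one]

lemma surjOn_pArcsinh (hp : 0 < p) : SurjOn (pArcsinh p) (Ici 0) (Ici 0) := by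
  intro z (hz : 0 ≤ z)
  set X := exp (z * 2 ^ (1 / p))
  have hX : 1 ≤ X := one_le_exp (mul_nonneg hz (by positivity))
  have hzX : z ≤ pArcsinh p X := by
    convert mul_log_le_pArcsinh hp hX using 1
    rw [log_exp, mul_left_comm, ← rpow_add two_pos, neg_add_cancel, rpow_zero, mul_one]
  obtain ⟨x, hx, rfl⟩ := intermediate_value_Icc (zero_le_one.trans hX)
    (continuousOn_pArcsinh hp.le (zero_le_one.trans hX)) (by simpa using ⟨hz, hzX⟩)
  exact ⟨x, hx.1, rfl⟩

lemma bijOn_pArcsinh (hp : 0 < p) : BijOn (pArcsinh p) (Ici 0) (Ici 0) :=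
  ⟨fun _ hx => pArcsinh_nonneg hp.le hx, (strictMonoOn_pArcsinh hp.le).injOn,
    surjOn_pArcsinh hp⟩

lemma invOn_pSinh (hp : 0 < p) : InvOn (pSinh p) (pArcsinh p) (Ici 0) (Ici 0) :=
  (bijOn_pArcsinh hp).invOn_invFunOn

lemma bijOn_pSinh (hp : 0 < p) : BijOn (pSinh p) (Ici 0) (Ici 0) :=
  (bijOn_pArcsinh hp).symm (invOn_pSinh hp).symm

variable {z : ℝ}

lemma pArcsinh_pSinh (hp : 0 < p) (hz : 0 ≤ z) : pArcsinh p (pSinh p z) = z :=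
  (invOn_pSinh hp).2 hz

lemma pSinh_nonneg (hp : 0 < p) (hz : 0 ≤ z) : 0 ≤ pSinh p z :=
  (bijOn_pSinh hp).mapsTo hz

lemma strictMonoOn_pSinh (hp : 0 < p) : StrictMonoOn (pSinh p) (Ici 0) := fun a ha b hb hab => by
  rwa [← (strictMonoOn_pArcsinh hp.le).lt_iff_lt (pSinh_nonneg hp ha) (pSinh_nonneg hp hb),
    pArcsinh_pSinh hp ha, pArcsinh_pSinh hp hb]

lemma pSinh_pos (hp : 0 < p) (hz : 0 < z) : 0 < pSinh p z := by
  have h0 : pSinh p 0 = 0 := by simpa using (invOn_pSinh hp).1 (self_mem_Ici (a := (0:ℝ)))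
  simpa [h0] using strictMonoOn_pSinh hp self_mem_Ici hz.le hz

lemma continuousAt_pSinh (hp : 0 < p) (hz : 0 < z) : ContinuousAt (pSinh p) z :=
  (strictMonoOn_pSinh hp).continuousAt_of_image_mem_nhds (Ici_mem_nhds hz)
    (by rw [(bijOn_pSinh hp).image_eq]; exact Ici_mem_nhds (pSinh_pos hp hz))

lemma hasDerivAt_pSinh (hp : 0 < p) (hz : 0 < z) :
    HasDerivAt (pSinh p) ((1 + pSinh p z ^ p) ^ (1 / p)) z := by
  have := HasDerivAt.of_local_left_inverse (continuousAt_pSinh hp hz)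
    (hasDerivAt_pArcsinh hp.le (pSinh_pos hp hz))
    (pArcsinh_integrand_pos (pSinh_nonneg hp hz.le)).ne'
    (Filter.eventually_of_mem (Ici_mem_nhds hz) fun w hw => pArcsinh_pSinh hp hw)
  rwa [← rpow_neg (one_add_rpow_pos (pSinh_nonneg hp hz.le)).le, neg_neg] at this

variable {q l : ℝ}

lemma exists_hasDerivAt_pArcsinh_geomMean_gt_one (hp : 0 < p) (hq : 0 < q) (hpq : p ≠ q)
    (hl0 : 0 < l) (hl1 : l < 1) (hz : 0 < z) :
    ∃ d, HasDerivAt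
      (fun x => pArcsinh (l * p + (1 - l) * q) (pSinh p x ^ l * pSinh q x ^ (1 - l))) d z ∧
      1 < d := by
  obtain ⟨d, hd, hle⟩ := exists_hasDerivAt_rpow_mul_rpow_ge (hasDerivAt_pSinh hp hz)
    (hasDerivAt_pSinh hq hz) (pSinh_pos hp hz) (pSinh_pos hq hz)
    (rpow_pos_of_pos (one_add_rpow_pos (pSinh_nonneg hp hz.le)) _).le
    (rpow_pos_of_pos (one_add_rpow_pos (pSinh_nonneg hq hz.le)) _).le hl0.le hl1.le
  have hC : 0 < pSinh p z ^ l * pSinh q z ^ (1 - l) := by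
    have := pSinh_pos hp hz
    have := pSinh_pos hq hz
    positivity
  have hbase := one_add_rpow_pos (p := l * p + (1 - l) * q) hC.le
  have hcomp := (hasDerivAt_pArcsinh (p := l * p + (1 - l) * q) (by positivity) hC).comp z hd
  refine ⟨_, hcomp, ?_⟩
  rw [rpow_neg hbase.le, inv_mul_eq_div, one_lt_div (rpow_pos_of_pos hbase _)]
  exact (one_add_rpow_geomMean_lt hp hq hpq hl0 hl1 (pSinh_pos hp hz) (pSinh_pos hq hz)).trans_le
    hle

lemma pSinh_lt_geomMean (hp : 0 < p) (hq : 0 < q) (hpq : p ≠ q) (hl0 : 0 < l) (hl1 : l < 1)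
    {y : ℝ} (hy : 0 < y) :
    pSinh (l * p + (1 - l) * q) y < pSinh p y ^ l * pSinh q y ^ (1 - l) := by
  set r := l * p + (1 - l) * q
  have hr : 0 < r := by positivity
  set C := fun z => pSinh p z ^ l * pSinh q z ^ (1 - l)
  have hC : ∀ z, 0 < z → 0 < C z := fun z hz => by
    have := pSinh_pos hp hz
    have := pSinh_pos hq hz
    positivity
  choose! d hd hd1 using fun z (hz : z ∈ Ioi (0:ℝ)) =>
    exists_hasDerivAt_pArcsinh_geomMean_gt_one hp hq hpq hl0 hl1 hz
  have hmono : StrictMonoOn (fun z => pArcsinh r (C z) - z) (Ioi 0) := by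
    refine strictMonoOn_of_hasDerivWithinAt_pos (convex_Ioi 0) (f' := fun z => d z - 1)
      (fun z hz => ((hd z hz).sub (hasDerivAt_id z)).continuousAt.continuousWithinAt)
      (fun z hz => ?_) (fun z hz => ?_) <;> rw [interior_Ioi] at hz
    · exact ((hd z hz).sub (hasDerivAt_id z)).hasDerivWithinAt
    · exact sub_pos.2 (hd1 z hz)
  have hpos := pos_of_strictMonoOn_of_neg_le hmono
    (fun z hz => by linarith [pArcsinh_nonneg hr.le (hC z hz).le]) hy
  rw [← (strictMonoOn_pArcsinh hr.le).lt_iff_lt (pSinh_nonneg hr hy.le) (hC y hy).le,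
    pArcsinh_pSinh hr hy.le]
  linarith

lemma strictConvexOn_log_pSinh {y : ℝ} (hy : 0 < y) :
    StrictConvexOn ℝ (Ioi 0) (fun p => log (pSinh p y)) := by
  refine ⟨convex_Ioi 0, fun p hp q hq hpq a b ha hb hab => ?_⟩
  obtain rfl : b = 1 - a := by linarith
  have hr : 0 < a * p + (1 - a) * q := add_pos (mul_pos ha hp) (mul_pos (by linarith) hq)
  have hSp := pSinh_pos hp hy
  have hSq := pSinh_pos hq hy
  calc log (pSinh (a * p + (1 - a) * q) y)
      < log (pSinh p y ^ a * pSinh q y ^ (1 - a)) :=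
        log_lt_log (pSinh_pos hr hy) (pSinh_lt_geomMean hp hq hpq ha (by linarith) hy)
    _ = a * log (pSinh p y) + (1 - a) * log (pSinh q y) := by
        rw [log_mul (by positivity) (by positivity), log_rpow hSp, log_rpow hSq]

end PSinh

end

/-- For fixed `y > 0`, `p ↦ sinh_p y` is strictly log-convex on `(0,∞)`; in
particular `(sinh_p y)² < sinh_{p-1} y · sinh_{p+1} y` for `p > 1`. -/
theorem sinhp_log_convex (sinhp : ℝ → ℝ → ℝ)
    (hinv : ∀ p : ℝ, 0 < p → ∀ x : ℝ, 0 ≤ x →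
      sinhp p (∫ t in (0:ℝ)..x, (1 + t ^ p) ^ (-(1 / p))) = x)
    (y : ℝ) (hy : 0 < y) :
    StrictConvexOn ℝ (Set.Ioi (0:ℝ)) (fun p => Real.log (sinhp p y)) ∧
    ∀ p : ℝ, 1 < p → (sinhp p y) ^ 2 < sinhp (p - 1) y * sinhp (p + 1) y := by
  have hval : ∀ p, 0 < p → sinhp p y = pSinh p y := fun p hp => by
    have := hinv p hp (pSinh p y) (pSinh_nonneg hp hy.le)
    change sinhp p (pArcsinh p (pSinh p y)) = _ at this
    rwa [pArcsinh_pSinh hp hy.le] at this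
  have hconv : StrictConvexOn ℝ (Ioi 0) (fun p => log (sinhp p y)) :=
    (strictConvexOn_log_pSinh hy).congr fun p hp => by simp only [hval p hp]
  exact ⟨hconv, fun p => sq_lt_mul_of_strictConvexOn_log hconv
    fun p hp => hval p hp ▸ pSinh_pos hp hy⟩
end

section
/- For each fixed y ∈ (0,∞), the function p ↦ tanh_p(y) is strictly concave on (0,∞); in particular, for p > 1 and y > 0, 2·tanh_p(y) > tanh_{p-1}(y) + tanh_{p+1}(y), and hence (tanh_p y)² > tanh_{p-1}(y)·tanh_{p+1}(y). -/
/-!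
`u = tanh_p` solves `u' = 1 - u ^ p`, `u 0 = 0`. A function that vanishes at `0` and has
positive derivative wherever it is nonpositive stays positive. With this comparison principle,
for `0 < p < q`, `u = tanh_p` and `v = tanh_q`, one gets `u < v` and then `p v < q u` on
`(0, ∞)`, the latter from Bernoulli's inequality `p (1 - x ^ q) ≤ q (1 - x ^ p)`.
For weights `a + b = 1` and `m = a p + b q`, these two bounds give
`(a u + b v) ^ m < u ^ (a p) v ^ (b q)`, which is at most `a u ^ p + b v ^ q` by AM-GM.
Hence wherever `w = tanh_m` is below `a u + b v`, the derivative
`a u ^ p + b v ^ q - w ^ m` of `w - (a u + b v)` is positive, and the comparison principle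
gives `w > a u + b v`.
-/

open Real Set MeasureTheory intervalIntegral

lemma HasDerivAt.nonpos_of_isMinOn_Icc {f : ℝ → ℝ} {a b d : ℝ} (hab : a < b)
    (hmin : IsMinOn f (Icc a b) b) (hf : HasDerivAt f d b) : d ≤ 0 := by
  have hcone : a - b ∈ posTangentConeAt (Icc a b) b :=
    sub_mem_posTangentConeAt_of_segment_subset (by rw [segment_symm, segment_eq_Icc hab.le])
  have := hmin.localize.hasFDerivWithinAt_nonneg hf.hasFDerivAt.hasFDerivWithinAt hcone
  simp only [ContinuousLinearMap.toSpanSingleton_apply, smul_eq_mul] at this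
  nlinarith

lemma pos_of_hasDerivAt_pos_of_nonpos {f : ℝ → ℝ} {a b : ℝ} (hab : a < b)
    (hf : ContinuousOn f (Icc a b)) (ha : 0 ≤ f a)
    (hd : ∀ t ∈ Ioc a b, f t ≤ 0 → ∃ d, HasDerivAt f d t ∧ 0 < d) : 0 < f b := by
  have pos_of_isMinOn : ∀ t ∈ Ioc a b, IsMinOn f (Icc a b) t → 0 < f t := by
    intro t ht hmin
    by_contra! hft
    obtain ⟨d, hfd, hd⟩ := hd t ht hft
    linarith [hfd.nonpos_of_isMinOn_Icc ht.1 (hmin.on_subset (Icc_subset_Icc_right ht.2))]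
  obtain ⟨c, hc, hmin⟩ := isCompact_Icc.exists_isMinOn (nonempty_Icc.2 hab.le) hf
  by_contra! hfb
  rcases hc.1.eq_or_lt with rfl | hac
  · have hbmin : IsMinOn f (Icc a b) b :=
      isMinOn_iff.2 fun t ht => hfb.trans (ha.trans (isMinOn_iff.1 hmin t ht))
    linarith [pos_of_isMinOn b ⟨hab, le_rfl⟩ hbmin]
  · linarith [pos_of_isMinOn c ⟨hac, hc.2⟩ hmin, isMinOn_iff.1 hmin b (right_mem_Icc.2 hab.le)]

lemma mul_one_sub_rpow_le {x p q : ℝ} (hx : 0 ≤ x) (hp : 0 < p) (hpq : p ≤ q) :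
    p * (1 - x ^ q) ≤ q * (1 - x ^ p) := by
  have hxq : x ^ q = (x ^ p) ^ (q / p) := by rw [← rpow_mul hx, mul_div_cancel₀ _ hp.ne']
  have hbernoulli := one_add_mul_self_le_rpow_one_add (s := x ^ p - 1)
    (by linarith [rpow_nonneg hx p]) ((one_le_div hp).2 hpq)
  rw [add_sub_cancel, ← hxq] at hbernoulli
  have := mul_le_mul_of_nonneg_left hbernoulli hp.le
  rw [mul_add, ← mul_assoc, mul_div_cancel₀ _ hp.ne'] at this
  linarith

lemma one_sub_rpow_le_max_mul {t p : ℝ} (ht : 0 ≤ t) (ht1 : t ≤ 1) (hp : 0 < p) :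
    1 - t ^ p ≤ max 1 p * (1 - t) := by
  rcases le_total p 1 with h | h
  · have : t ≤ t ^ p := by simpa using rpow_le_rpow_of_exponent_ge' ht ht1 hp.le h
    rw [max_eq_left h]
    linarith
  · simpa [max_eq_right h] using mul_one_sub_rpow_le ht one_pos h

lemma mul_add_mul_rpow_lt {p q a b x y : ℝ} (hp : 0 ≤ p) (ha : 0 < a) (hb : 0 < b)
    (hab : a + b = 1) (hx : 0 < x) (hxy : x < y) (hpq : p * y < q * x) :
    (a * x + b * y) ^ (a * p + b * q) < x ^ (a * p) * y ^ (b * q) := by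
  set m := a * p + b * q
  set ψ : ℝ → ℝ := fun t => b * q * log t - m * log (a * x + b * t)
  -- After taking logarithms the claim is `ψ x < ψ y`, and `ψ' t` has the sign of `q x - p t`.
  have hψ : ∀ t ∈ Icc x y, HasDerivAt ψ (b * q / t - m * b / (a * x + b * t)) t := by
    intro t ht
    have ht0 : 0 < t := hx.trans_le ht.1
    have hc : 0 < a * x + b * t := by nlinarith [ht.1]
    have h1 := ((hasDerivAt_log ht0.ne').const_mul (b * q))
    have h2 := (((hasDerivAt_id t).const_mul b).const_add (a * x)).log hc.ne' |>.const_mul m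
    exact (h1.sub h2).congr_deriv (by simp only [id, mul_one]; ring)
  have hmono : StrictMonoOn ψ (Icc x y) := by
    refine strictMonoOn_of_deriv_pos (convex_Icc x y)
      (fun t ht => (hψ t ht).continuousAt.continuousWithinAt) fun t ht => ?_
    rw [interior_Icc] at ht
    have ht0 : 0 < t := hx.trans ht.1
    have hc : 0 < a * x + b * t := by nlinarith [ht.1]
    rw [(hψ t (Ioo_subset_Icc_self ht)).deriv, div_sub_div _ _ ht0.ne' hc.ne']
    refine div_pos ?_ (by positivity)
    have hpt : p * t < q * x := by nlinarith [ht.2]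
    have hnum : b * q * (a * x + b * t) - t * (m * b) = a * b * (q * x - p * t) := by ring
    rw [hnum]
    exact mul_pos (mul_pos ha hb) (sub_pos.2 hpt)
  have hψxy := hmono (left_mem_Icc.2 hxy.le) (right_mem_Icc.2 hxy.le) hxy
  have hcx : a * x + b * x = x := by rw [← add_mul, hab, one_mul]
  simp only [ψ, hcx] at hψxy
  have hc : 0 < a * x + b * y := by nlinarith
  rw [rpow_def_of_pos hc, rpow_def_of_pos hx, rpow_def_of_pos (hx.trans hxy), ← exp_add,
    exp_lt_exp]
  linarith

noncomputable def arctanhp (p x : ℝ) : ℝ := ∫ t in (0 : ℝ)..x, 1 / (1 - t ^ p)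

section arctanhp

variable {p x y : ℝ}

lemma continuousOn_one_div_one_sub_rpow (hp : 0 < p) :
    ContinuousOn (fun t : ℝ => 1 / (1 - t ^ p)) (Ico 0 1) :=
  continuousOn_const.div (continuousOn_const.sub (continuousOn_id.rpow_const fun _ _ => .inr hp.le))
    fun _ ht => (sub_pos.2 (rpow_lt_one ht.1 ht.2 hp)).ne'

lemma intervalIntegrable_one_div_one_sub_rpow (hp : 0 < p) (hx : x ∈ Ico 0 1)
    (hy : y ∈ Ico 0 1) : IntervalIntegrable (fun t : ℝ => 1 / (1 - t ^ p)) volume x y :=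
  ((continuousOn_one_div_one_sub_rpow hp).mono
    (ordConnected_Ico.uIcc_subset hx hy)).intervalIntegrable

@[simp]
lemma arctanhp_zero (p : ℝ) : arctanhp p 0 = 0 := integral_same

lemma sub_le_arctanhp_sub (hp : 0 < p) (hx : 0 ≤ x) (hxy : x ≤ y) (hy : y < 1) :
    y - x ≤ arctanhp p y - arctanhp p x := by
  have hx1 : x ∈ Ico (0 : ℝ) 1 := ⟨hx, hxy.trans_lt hy⟩
  have hy1 : y ∈ Ico (0 : ℝ) 1 := ⟨hx.trans hxy, hy⟩
  rw [arctanhp, arctanhp, integral_interval_sub_left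
    (intervalIntegrable_one_div_one_sub_rpow hp (left_mem_Ico.2 one_pos) hy1)
    (intervalIntegrable_one_div_one_sub_rpow hp (left_mem_Ico.2 one_pos) hx1)]
  calc y - x = ∫ _ in x..y, (1 : ℝ) := by simp
    _ ≤ _ := integral_mono_on hxy intervalIntegrable_const
          (intervalIntegrable_one_div_one_sub_rpow hp hx1 hy1) fun t ht =>
        one_le_one_div (sub_pos.2 (rpow_lt_one (hx.trans ht.1) (ht.2.trans_lt hy) hp))
          (by linarith [rpow_nonneg (hx.trans ht.1) p])

lemma dist_le_dist_arctanhp (hp : 0 < p) (hx : x ∈ Ico 0 1) (hy : y ∈ Ico 0 1) :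
    dist x y ≤ dist (arctanhp p x) (arctanhp p y) := by
  rcases le_total x y with hxy | hxy
  · have := sub_le_arctanhp_sub hp hx.1 hxy hy.2
    rw [dist_comm, dist_comm (arctanhp p x), dist_eq, dist_eq, abs_of_nonneg (by linarith)]
    exact this.trans (le_abs_self _)
  · have := sub_le_arctanhp_sub hp hy.1 hxy hx.2
    rw [dist_eq, dist_eq, abs_of_nonneg (by linarith)]
    exact this.trans (le_abs_self _)

lemma continuousOn_arctanhp (hp : 0 < p) (hx0 : 0 ≤ x) (hx1 : x < 1) :
    ContinuousOn (arctanhp p) (Icc 0 x) := by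
  have hcont := (continuousOn_one_div_one_sub_rpow hp).mono (Icc_subset_Ico_right hx1)
  rw [← uIcc_of_le hx0] at hcont ⊢
  exact continuousOn_primitive_interval hcont.integrableOn_uIcc

lemma hasDerivAt_arctanhp (hp : 0 < p) (hx0 : 0 < x) (hx1 : x < 1) :
    HasDerivAt (arctanhp p) (1 / (1 - x ^ p)) x := by
  have hcont := (continuousOn_one_div_one_sub_rpow hp).mono Ioo_subset_Ico_self
  exact integral_hasDerivAt_right
    (intervalIntegrable_one_div_one_sub_rpow hp (left_mem_Ico.2 one_pos) ⟨hx0.le, hx1⟩)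
    (hcont.stronglyMeasurableAtFilter isOpen_Ioo x ⟨hx0, hx1⟩)
    (hcont.continuousAt (isOpen_Ioo.mem_nhds ⟨hx0, hx1⟩))

lemma neg_log_one_sub_div_le_arctanhp (hp : 0 < p) (hx0 : 0 ≤ x) (hx1 : x < 1) :
    -log (1 - x) / max 1 p ≤ arctanhp p x := by
  set C := max 1 p
  have hC : 0 < C := one_pos.trans_le (le_max_left 1 p)
  have hcont : ContinuousOn (fun t : ℝ => (1 - t)⁻¹) (uIcc 0 x) :=
    ContinuousOn.inv₀ (f := fun t => 1 - t) (by fun_prop) fun t ht => by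
      rw [uIcc_of_le hx0] at ht; linarith [ht.2]
  calc -log (1 - x) / C = C⁻¹ * ∫ t in (0 : ℝ)..x, (1 - t)⁻¹ := by
        rw [integral_comp_sub_left (fun t => t⁻¹), sub_zero, integral_inv_of_pos (by linarith)
          one_pos, one_div, log_inv, div_eq_inv_mul]
    _ = ∫ t in (0 : ℝ)..x, C⁻¹ * (1 - t)⁻¹ :=
        (intervalIntegral.integral_const_mul _ _).symm
    _ ≤ arctanhp p x := integral_mono_on hx0 (hcont.intervalIntegrable.const_mul _)
          (intervalIntegrable_one_div_one_sub_rpow hp (left_mem_Ico.2 one_pos) ⟨hx0, hx1⟩)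
          fun t ht => by
        have ht1 : t < 1 := ht.2.trans_lt hx1
        rw [← mul_inv, one_div]
        exact inv_anti₀ (sub_pos.2 (rpow_lt_one ht.1 ht1 hp))
          (by linarith [one_sub_rpow_le_max_mul ht.1 ht1.le hp])

lemma exists_arctanhp_eq (hp : 0 < p) (hy : 0 ≤ y) : ∃ x ∈ Ico 0 1, arctanhp p x = y := by
  set C := max 1 p
  have hC : 0 < C := one_pos.trans_le (le_max_left 1 p)
  set b := 1 - exp (-(C * y))
  have hb0 : 0 ≤ b := sub_nonneg.2 (exp_le_one_iff.2 (by nlinarith))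
  have hb1 : b < 1 := sub_lt_self 1 (exp_pos _)
  have hyb : y ≤ arctanhp p b := by
    convert neg_log_one_sub_div_le_arctanhp hp hb0 hb1 using 1
    rw [sub_sub_cancel, log_exp, neg_neg, mul_div_cancel_left₀ _ hC.ne']
  obtain ⟨x, hx, hxy⟩ := intermediate_value_Icc hb0 (continuousOn_arctanhp hp hb0 hb1)
    ⟨by simpa using hy, hyb⟩
  exact ⟨x, ⟨hx.1, hx.2.trans_lt hb1⟩, hxy⟩

end arctanhp

def IsTanhp (p : ℝ) (u : ℝ → ℝ) : Prop :=
  ∀ τ, 0 ≤ τ → u τ ∈ Ico (0 : ℝ) 1 ∧ arctanhp p (u τ) = τ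

namespace IsTanhp

variable {p q a b : ℝ} {u v w : ℝ → ℝ} {τ : ℝ}

lemma of_leftInvOn (hp : 0 < p) (h : LeftInvOn u (arctanhp p) (Ico 0 1)) : IsTanhp p u := by
  intro τ hτ
  obtain ⟨x, hx, rfl⟩ := exists_arctanhp_eq hp hτ
  rw [h hx]
  exact ⟨hx, rfl⟩

lemma nonneg (hu : IsTanhp p u) (hτ : 0 ≤ τ) : 0 ≤ u τ := (hu τ hτ).1.1

lemma lt_one (hu : IsTanhp p u) (hτ : 0 ≤ τ) : u τ < 1 := (hu τ hτ).1.2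

lemma pos (hu : IsTanhp p u) (hτ : 0 < τ) : 0 < u τ := by
  refine (hu.nonneg hτ.le).lt_of_ne fun h => hτ.ne ?_
  rw [← (hu τ hτ.le).2, ← h, arctanhp_zero]

lemma apply_zero (hp : 0 < p) (hu : IsTanhp p u) : u 0 = 0 := by
  have := sub_le_arctanhp_sub hp le_rfl (hu.nonneg le_rfl) (hu.lt_one le_rfl)
  rw [(hu 0 le_rfl).2, arctanhp_zero] at this
  linarith [hu.nonneg le_rfl]

lemma continuousOn (hp : 0 < p) (hu : IsTanhp p u) : ContinuousOn u (Ici 0) := by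
  refine (LipschitzOnWith.of_dist_le_mul (K := 1) fun σ hσ τ hτ => ?_).continuousOn
  rw [NNReal.coe_one, one_mul]
  simpa only [(hu σ hσ).2, (hu τ hτ).2] using
    dist_le_dist_arctanhp hp (hu σ hσ).1 (hu τ hτ).1

lemma hasDerivAt (hp : 0 < p) (hu : IsTanhp p u) (hτ : 0 < τ) :
    HasDerivAt u (1 - u τ ^ p) τ := by
  have hden : 0 < 1 - u τ ^ p := sub_pos.2 (rpow_lt_one (hu.nonneg hτ.le) (hu.lt_one hτ.le) hp)
  have hinv := HasDerivAt.of_local_left_inverse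
    ((hu.continuousOn hp).continuousAt (Ici_mem_nhds hτ))
    (hasDerivAt_arctanhp hp (hu.pos hτ) (hu.lt_one hτ.le)) (one_div_pos.2 hden).ne'
    (Filter.eventually_of_mem (Ioi_mem_nhds hτ) fun σ hσ => (hu σ (le_of_lt hσ)).2)
  rwa [one_div, inv_inv] at hinv

lemma apply_lt_of_lt (hp : 0 < p) (hpq : p < q) (hu : IsTanhp p u) (hv : IsTanhp q v)
    (hτ : 0 < τ) : u τ < v τ := by
  have hq := hp.trans hpq
  refine sub_pos.1 <| pos_of_hasDerivAt_pos_of_nonpos (f := v - u) hτ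
    (((hv.continuousOn hq).sub (hu.continuousOn hp)).mono Icc_subset_Ici_self)
    (by simp [hu.apply_zero hp, hv.apply_zero hq]) fun σ ⟨hσ, _⟩ hvu => ?_
  refine ⟨_, (hv.hasDerivAt hq hσ).sub (hu.hasDerivAt hp hσ), ?_⟩
  have h1 : v σ ^ q < v σ ^ p := rpow_lt_rpow_of_exponent_gt (hv.pos hσ) (hv.lt_one hσ.le) hpq
  have h2 : v σ ^ p ≤ u σ ^ p := rpow_le_rpow (hv.nonneg hσ.le) (sub_nonpos.1 hvu) hp.le
  linarith

lemma mul_apply_lt_mul_apply (hp : 0 < p) (hpq : p < q) (hu : IsTanhp p u) (hv : IsTanhp q v)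
    (hτ : 0 < τ) : p * v τ < q * u τ := by
  have hq := hp.trans hpq
  refine sub_pos.1 <| pos_of_hasDerivAt_pos_of_nonpos (f := fun σ => q * u σ - p * v σ) hτ
    ((((hu.continuousOn hp).const_smul q).sub ((hv.continuousOn hq).const_smul p)).mono
      Icc_subset_Ici_self)
    (by simp [hu.apply_zero hp, hv.apply_zero hq]) fun σ ⟨hσ, _⟩ hle => ?_
  refine ⟨_, ((hu.hasDerivAt hp hσ).const_mul q).sub ((hv.hasDerivAt hq hσ).const_mul p), ?_⟩
  have huv : u σ < v σ := by nlinarith [hu.pos hσ]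
  have h1 : u σ ^ q < v σ ^ q := rpow_lt_rpow (hu.nonneg hσ.le) huv hq
  have h2 := mul_one_sub_rpow_le (hu.nonneg hσ.le) hp hpq.le
  nlinarith

lemma mul_add_mul_lt (hp : 0 < p) (hpq : p < q) (ha : 0 < a) (hb : 0 < b) (hab : a + b = 1)
    (hu : IsTanhp p u) (hv : IsTanhp q v) (hw : IsTanhp (a * p + b * q) w) (hτ : 0 < τ) :
    a * u τ + b * v τ < w τ := by
  have hq := hp.trans hpq
  have hm : 0 < a * p + b * q := by positivity
  refine sub_pos.1 <|
    pos_of_hasDerivAt_pos_of_nonpos (f := fun σ => w σ - (a * u σ + b * v σ)) hτ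
    (((hw.continuousOn hm).sub (((hu.continuousOn hp).const_smul a).add
      ((hv.continuousOn hq).const_smul b))).mono Icc_subset_Ici_self)
    (by simp [hu.apply_zero hp, hv.apply_zero hq, hw.apply_zero hm]) fun σ ⟨hσ, _⟩ hwuv => ?_
  refine ⟨_, (hw.hasDerivAt hm hσ).sub (((hu.hasDerivAt hp hσ).const_mul a).add
    ((hv.hasDerivAt hq hσ).const_mul b)), ?_⟩
  have hw_le : w σ ^ (a * p + b * q) ≤ (a * u σ + b * v σ) ^ (a * p + b * q) :=
    rpow_le_rpow (hw.nonneg hσ.le) (sub_nonpos.1 hwuv) hm.le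
  have hlt := mul_add_mul_rpow_lt hp.le ha hb hab (hu.pos hσ) (hu.apply_lt_of_lt hp hpq hv hσ)
    (hu.mul_apply_lt_mul_apply hp hpq hv hσ)
  have hamgm := geom_mean_le_arith_mean2_weighted ha.le hb.le
    (rpow_nonneg (hu.nonneg hσ.le) p) (rpow_nonneg (hv.nonneg hσ.le) q) hab
  rw [← rpow_mul (hu.nonneg hσ.le), ← rpow_mul (hv.nonneg hσ.le), mul_comm p, mul_comm q]
    at hamgm
  linear_combination hw_le + hlt + hamgm + hab

end IsTanhp

/-- For fixed `y > 0`, `p ↦ tanh_p y` is strictly concave on `(0,∞)`; in particular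
for `p > 1`, `2 tanh_p y > tanh_{p-1} y + tanh_{p+1} y` and hence
`(tanh_p y)² > tanh_{p-1} y · tanh_{p+1} y`. -/
theorem tanhp_concave (tanhp : ℝ → ℝ → ℝ)
    (hinv : ∀ p : ℝ, 0 < p → ∀ x ∈ Set.Ico (0:ℝ) 1,
      tanhp p (∫ t in (0:ℝ)..x, 1 / (1 - t ^ p)) = x)
    (y : ℝ) (hy : 0 < y) :
    StrictConcaveOn ℝ (Set.Ioi (0:ℝ)) (fun p => tanhp p y) ∧
    ∀ p : ℝ, 1 < p →
      tanhp (p - 1) y + tanhp (p + 1) y < 2 * tanhp p y ∧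
      tanhp (p - 1) y * tanhp (p + 1) y < (tanhp p y) ^ 2 := by
  have htanhp (p : ℝ) (hp : 0 < p) : IsTanhp p (tanhp p) := .of_leftInvOn hp (hinv p hp)
  have hconc : StrictConcaveOn ℝ (Ioi 0) (fun p => tanhp p y) :=
    LinearOrder.strictConcaveOn_of_lt (convex_Ioi 0) fun p hp q hq hpq a b ha hb hab =>
      (htanhp p hp).mul_add_mul_lt hp hpq ha hb hab (htanhp q hq)
        (htanhp _ (by simp only [mem_Ioi] at hp hq; positivity)) hy
  refine ⟨hconc, fun p hp => ?_⟩
  have hmid := hconc.2 (show p - 1 ∈ Ioi 0 from sub_pos.2 hp)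
    (show p + 1 ∈ Ioi 0 by simp only [mem_Ioi]; linarith) (by linarith : p - 1 ≠ p + 1)
    (by norm_num : (0 : ℝ) < 1 / 2) (by norm_num : (0 : ℝ) < 1 / 2) (by norm_num)
  rw [smul_eq_mul, smul_eq_mul, smul_eq_mul, smul_eq_mul,
    show 1 / 2 * (p - 1) + 1 / 2 * (p + 1) = p by ring] at hmid
  have hA := (htanhp (p - 1) (sub_pos.2 hp)).nonneg hy.le
  have hB := (htanhp (p + 1) (by linarith)).nonneg hy.le
  refine ⟨by linarith, ?_⟩
  nlinarith [sq_nonneg (tanhp (p - 1) y - tanhp (p + 1) y)]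
end

section
/- For p > 0 and x ∈ (0,1), the inequality (∫₀ˣ t^p(t^p+1)(log(1/t))²/(1-t^p)³ dt) / (∫₀ˣ t^p log(1/t)/(1-t^p)² dt) > (x^p+1)·log(1/x)/(1-x^p) > 2 x^p log(1/x)/(1-x^p) holds. -/
open Real Set

/-!
The numerator's integrand is `f t * g t`, where `g` is the (positive) denominator's integrand and
`f t = (t ^ p + 1) * log (1 / t) / (1 - t ^ p)`. Since `p * f t = φ (t ^ p)` with
`φ u = (1 + u) * (-log u) / (1 - u)`, and `φ'` has the sign of `2 s - 2 sinh s < 0` for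
`s = -log u`, `f` is strictly decreasing on `(0, 1)`. So `f t > f x` on `(0, x)`, and integrating
`f t * g t > f x * g t` gives the first inequality; the second one is `2 x ^ p < x ^ p + 1`.
-/

theorem two_mul_neg_log_lt_inv_sub {u : ℝ} (h0 : 0 < u) (h1 : u < 1) :
    2 * -log u < u⁻¹ - u := by
  have hs : -log u < sinh (-log u) := self_lt_sinh_iff.2 (neg_pos.2 (log_neg h0 h1))
  rw [sinh_eq, neg_neg, exp_neg, exp_log h0] at hs
  linarith

theorem strictAntiOn_one_add_mul_neg_log_div_one_sub :
    StrictAntiOn (fun u : ℝ ↦ (1 + u) * -log u / (1 - u)) (Ioo 0 1) := by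
  have hderiv : ∀ u ∈ Ioo (0 : ℝ) 1, HasDerivAt (fun u : ℝ ↦ (1 + u) * -log u / (1 - u))
      ((2 * -log u - (u⁻¹ - u)) / (1 - u) ^ 2) u := by
    rintro u ⟨h0, h1⟩
    have hne : 1 - u ≠ 0 := sub_ne_zero.2 h1.ne'
    refine ((((hasDerivAt_id' u).const_add 1).fun_mul (hasDerivAt_log h0.ne').fun_neg).fun_div
      ((hasDerivAt_id' u).const_sub 1) hne).congr_deriv ?_
    field_simp
    ring
  refine strictAntiOn_of_deriv_neg (convex_Ioo 0 1)
    (fun u hu ↦ (hderiv u hu).continuousAt.continuousWithinAt) fun u hu ↦ ?_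
  rw [interior_Ioo] at hu
  rw [(hderiv u hu).deriv]
  have hsq : 0 < (1 - u) ^ 2 := pow_pos (sub_pos.2 hu.2) 2
  exact div_neg_of_neg_of_pos (by linarith [two_mul_neg_log_lt_inv_sub hu.1 hu.2]) hsq

theorem strictAntiOn_rpow_add_one_mul_log_one_div_div {p : ℝ} (hp : 0 < p) :
    StrictAntiOn (fun t : ℝ ↦ (t ^ p + 1) * log (1 / t) / (1 - t ^ p)) (Ioo 0 1) := by
  have hmaps : ∀ t ∈ Ioo (0 : ℝ) 1, t ^ p ∈ Ioo (0 : ℝ) 1 := fun t ht ↦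
    ⟨rpow_pos_of_pos ht.1 p, rpow_lt_one ht.1.le ht.2 hp⟩
  have hsubst : ∀ t ∈ Ioo (0 : ℝ) 1, (1 + t ^ p) * -log (t ^ p) / (1 - t ^ p)
      = p * ((t ^ p + 1) * log (1 / t) / (1 - t ^ p)) := fun t ht ↦ by
    rw [log_rpow ht.1, one_div, log_inv]
    ring
  intro s hs t ht hst
  have key := strictAntiOn_one_add_mul_neg_log_div_one_sub (hmaps s hs) (hmaps t ht)
    (rpow_lt_rpow hs.1.le hst hp)
  simp only [hsubst s hs, hsubst t ht] at key
  exact lt_of_mul_lt_mul_left key hp.le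

theorem continuousOn_rpow_mul_log {q : ℝ} (hq : 0 < q) :
    ContinuousOn (fun t : ℝ ↦ t ^ q * log t) (Ici 0) := by
  -- `t ^ q * log t = (t ^ q * log (t ^ q)) / q`, and `s ↦ s * log s` is continuous at `0`
  refine ((continuous_mul_log.comp (continuous_rpow_const hq.le)).div_const q).continuousOn.congr
    fun t ht ↦ ?_
  rcases (mem_Ici.1 ht).eq_or_lt with rfl | ht
  · simp [zero_rpow hq.ne']
  · simp only [Function.comp_apply, log_rpow ht]
    field_simp

theorem continuousOn_rpow_mul_log_one_div_div_one_sub_rpow_sq {p : ℝ} (hp : 0 < p) :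
    ContinuousOn (fun t : ℝ ↦ t ^ p * log (1 / t) / (1 - t ^ p) ^ 2) (Ico 0 1) := by
  have hnum : ContinuousOn (fun t : ℝ ↦ t ^ p * log (1 / t)) (Ici 0) := by
    simpa only [one_div, log_inv, mul_neg, Pi.neg_def] using (continuousOn_rpow_mul_log hp).neg
  have hrpow : Continuous fun t : ℝ ↦ t ^ p := continuous_rpow_const hp.le
  refine (hnum.mono Ico_subset_Ici_self).div (by fun_prop) fun t ht ↦ ?_
  exact pow_ne_zero 2 (sub_ne_zero.2 (rpow_lt_one ht.1 ht.2 hp).ne')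

theorem continuousOn_rpow_mul_rpow_add_one_mul_log_one_div_sq_div_one_sub_rpow_cube
    {p : ℝ} (hp : 0 < p) :
    ContinuousOn (fun t : ℝ ↦ t ^ p * (t ^ p + 1) * log (1 / t) ^ 2 / (1 - t ^ p) ^ 3)
      (Ico 0 1) := by
  have hnum : ContinuousOn (fun t : ℝ ↦ t ^ (p / 2) * log (1 / t)) (Ici 0) := by
    simpa only [one_div, log_inv, mul_neg, Pi.neg_def] using
      (continuousOn_rpow_mul_log (half_pos hp)).neg
  have hrpow : Continuous fun t : ℝ ↦ t ^ p := continuous_rpow_const hp.le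
  have hsq : ∀ t ∈ Ico (0 : ℝ) 1, (t ^ (p / 2) * log (1 / t)) ^ 2 * (t ^ p + 1)
      = t ^ p * (t ^ p + 1) * log (1 / t) ^ 2 := fun t ht ↦ by
    rw [mul_pow, ← rpow_mul_natCast ht.1]
    push_cast
    ring_nf
  refine ((((hnum.mono Ico_subset_Ici_self).pow 2).mul (by fun_prop)).congr fun t ht ↦
    (hsq t ht).symm).div (by fun_prop) fun t ht ↦ ?_
  exact pow_ne_zero 3 (sub_ne_zero.2 (rpow_lt_one ht.1 ht.2 hp).ne')

theorem rpow_mul_log_one_div_div_one_sub_rpow_sq_pos {p t : ℝ} (hp : 0 < p)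
    (ht : t ∈ Ioo 0 1) : 0 < t ^ p * log (1 / t) / (1 - t ^ p) ^ 2 :=
  div_pos (mul_pos (rpow_pos_of_pos ht.1 p) (log_pos (one_lt_one_div ht.1 ht.2)))
    (pow_pos (sub_pos.2 (rpow_lt_one ht.1.le ht.2 hp)) 2)

theorem intervalIntegral.integral_lt_integral_of_forall_mem_Ioo_lt {f g : ℝ → ℝ} {a b : ℝ}
    (hab : a < b) (hf : IntervalIntegrable f MeasureTheory.volume a b)
    (hg : IntervalIntegrable g MeasureTheory.volume a b) (hlt : ∀ t ∈ Ioo a b, f t < g t) :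
    ∫ t in a..b, f t < ∫ t in a..b, g t := by
  rw [← sub_pos, ← intervalIntegral.integral_sub hg hf]
  exact intervalIntegral.intervalIntegral_pos_of_pos_on (hg.sub hf)
    (fun t ht ↦ sub_pos.2 (hlt t ht)) hab

theorem tanh_ratio_inequality (p x : ℝ) (hp : 0 < p) (hx : x ∈ Set.Ioo (0:ℝ) 1) :
    (x ^ p + 1) * Real.log (1 / x) / (1 - x ^ p)
      < (∫ t in (0:ℝ)..x, t ^ p * (t ^ p + 1) * (Real.log (1 / t)) ^ 2 / (1 - t ^ p) ^ 3)
        / (∫ t in (0:ℝ)..x, t ^ p * Real.log (1 / t) / (1 - t ^ p) ^ 2) ∧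
    2 * x ^ p * Real.log (1 / x) / (1 - x ^ p)
      < (x ^ p + 1) * Real.log (1 / x) / (1 - x ^ p) := by
  obtain ⟨hx0, hx1⟩ := hx
  have hIcc : Icc 0 x ⊆ Ico (0 : ℝ) 1 := Icc_subset_Ico_right hx1
  have hg := ((continuousOn_rpow_mul_log_one_div_div_one_sub_rpow_sq hp).mono hIcc
    ).intervalIntegrable_of_Icc (μ := MeasureTheory.volume) hx0.le
  have hF := ((continuousOn_rpow_mul_rpow_add_one_mul_log_one_div_sq_div_one_sub_rpow_cube hp
    ).mono hIcc).intervalIntegrable_of_Icc (μ := MeasureTheory.volume) hx0.le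
  have hg_pos : ∀ t ∈ Ioo 0 x, 0 < t ^ p * log (1 / t) / (1 - t ^ p) ^ 2 := fun t ht ↦
    rpow_mul_log_one_div_div_one_sub_rpow_sq_pos hp ⟨ht.1, ht.2.trans hx1⟩
  refine ⟨?_, ?_⟩
  · rw [lt_div_iff₀ (intervalIntegral.intervalIntegral_pos_of_pos_on hg hg_pos hx0),
      ← intervalIntegral.integral_const_mul]
    refine intervalIntegral.integral_lt_integral_of_forall_mem_Ioo_lt hx0 (hg.const_mul _) hF
      fun t ht ↦ ?_
    have hft := strictAntiOn_rpow_add_one_mul_log_one_div_div hp ⟨ht.1, ht.2.trans hx1⟩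
      ⟨hx0, hx1⟩ ht.2
    have hne : 1 - t ^ p ≠ 0 := sub_ne_zero.2 (rpow_lt_one ht.1.le (ht.2.trans hx1) hp).ne'
    calc _ < (t ^ p + 1) * log (1 / t) / (1 - t ^ p) * (t ^ p * log (1 / t) / (1 - t ^ p) ^ 2) :=
          mul_lt_mul_of_pos_right hft (hg_pos t ht)
      _ = _ := by field_simp
  · have hxp : x ^ p < 1 := rpow_lt_one hx0.le hx1 hp
    have hlog : 0 < log (1 / x) := log_pos (one_lt_one_div hx0 hx1)
    gcongr
    linarith
end
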